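/- arXiv:2512.08250 — 7 statements merged into one kernel-verified Lean document; each statement's English description precedes it below -/
import Mathlib

section
/- Let ℓ be an odd prime, q an odd prime power with the order m of q in (Z/ℓZ)^× even. Let λ₁ be a multiplicative character of F_{q^m} of order ℓ and λ₂ the quadratic character of F_{q^m}. Then the Jacobi sum J(λ₁, λ₂) is a real number; more precisely, J(λ₁, λ₂) equals its complex conjugate. -/
set_option maxHeartbeats 1000000


/-- If the order m of q modulo ℓ is even, the Jacobi sum J(λ₁, λ₂) of a character λ₁ of
order ℓ and the quadratic character λ₂ of F_{q^m} equals its complex conjugate. -/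
theorem stmt_3 (q ℓ m : ℕ) (hq : Odd q) (hq' : IsPrimePow q) (hℓ : ℓ.Prime) (hℓodd : Odd ℓ)
    (hqℓ : ¬ ℓ ∣ q) (hm : orderOf (q : ZMod ℓ) = m) (hme : Even m)
    (F : Type*) [Field F] [Fintype F] (hF : Fintype.card F = q ^ m)
    (χ₁ χ₂ : MulChar F ℂ) (h₁ : orderOf χ₁ = ℓ) (h₂ : orderOf χ₂ = 2) :
    (starRingEnd ℂ) (jacobiSum χ₁ χ₂) = jacobiSum χ₁ χ₂ := by
  classical
  haveI : Fact ℓ.Prime := ⟨hℓ⟩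
  haveI : NeZero ℓ := ⟨hℓ.ne_zero⟩
  obtain ⟨t, ht⟩ := hme
  have hmpos : 0 < m := by
    obtain ⟨u, hu⟩ := (ZMod.isUnit_iff_coprime q ℓ).mpr
      (Nat.coprime_comm.mp (hℓ.coprime_iff_not_dvd.mpr hqℓ))
    rw [← hm, ← hu, orderOf_units]
    exact orderOf_pos u
  have htpos : 0 < t := by omega
  -- q^t ≡ -1 (mod ℓ)
  have hq1 : ((q : ZMod ℓ)) ^ t ≠ 1 := by
    intro h
    have hd := orderOf_dvd_of_pow_eq_one h
    rw [hm] at hd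
    have := Nat.le_of_dvd htpos hd
    omega
  have hsq : ((q : ZMod ℓ)) ^ t * ((q : ZMod ℓ)) ^ t = 1 := by
    rw [← pow_add, show t + t = m by omega]
    exact hm ▸ pow_orderOf_eq_one _
  have hneg : ((q : ZMod ℓ)) ^ t = -1 := (mul_self_eq_one_iff.mp hsq).resolve_left hq1
  have hdvd : ℓ ∣ q ^ t + 1 := by
    have : ((q ^ t + 1 : ℕ) : ZMod ℓ) = 0 := by push_cast; rw [hneg]; ring
    exact (ZMod.natCast_eq_zero_iff _ _).mp this
  set n := q ^ t with hn
  have hnodd : Odd n := hq.pow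
  have hnne : n ≠ 0 := by
    intro h; rw [h] at hnodd; exact (Nat.not_odd_iff_even.mpr Even.zero) hnodd
  -- character identities
  have hc1 : χ₁ ^ n = χ₁⁻¹ := by
    have h1 : χ₁ ^ (n + 1) = 1 := orderOf_dvd_iff_pow_eq_one.mp (h₁ ▸ hdvd)
    have : χ₁ ^ n * χ₁ = 1 := by rw [← pow_succ]; exact h1
    exact eq_inv_of_mul_eq_one_left this
  have h2' : χ₂ ^ 2 = 1 := h₂ ▸ pow_orderOf_eq_one χ₂
  have hc2 : χ₂ ^ n = χ₂ := by
    obtain ⟨s, hs⟩ := hnodd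
    rw [hs, pow_succ, pow_mul, h2', one_pow, one_mul]
  have hc2' : χ₂⁻¹ = χ₂ := by
    have : χ₂ * χ₂ = 1 := by rw [← sq]; exact h2'
    exact (eq_inv_of_mul_eq_one_left this).symm
  -- characteristic of F
  obtain ⟨p, k, hpp, hk, hpk⟩ := hq'
  have hpP : p.Prime := hpp.nat_prime
  haveI : Fact p.Prime := ⟨hpP⟩
  have hcharP : CharP F p := by
    have hchar : CharP F (ringChar F) := ringChar.charP F
    have hrp : (ringChar F).Prime := CharP.char_is_prime F (ringChar F)
    have hdvdcard : ringChar F ∣ Fintype.card F := by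
      have h0 : ((Fintype.card F : ℕ) : F) = 0 := FiniteField.cast_card_eq_zero F
      exact (CharP.cast_eq_zero_iff F (ringChar F) _).mp h0
    rw [hF, ← hpk, ← pow_mul] at hdvdcard
    have : ringChar F = p := (Nat.prime_dvd_prime_iff_eq hrp hpP).mp
      (hrp.dvd_of_dvd_pow hdvdcard)
    rwa [this] at hchar
  haveI := hcharP
  have hpn : p ^ (k * t) = n := by rw [pow_mul, hpk]
  -- the map x ↦ x^n is bijective
  have hbij : Function.Bijective (fun x : F => x ^ n) := by
    have hinj : Function.Injective (fun x : F => x ^ n) := by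
      intro a b hab
      have : (frobenius F p)^[k * t] a = (frobenius F p)^[k * t] b := by
        simpa [iterate_frobenius, hpn] using hab
      exact Function.Injective.iterate (frobenius F p).injective (k * t) this
    exact Finite.injective_iff_bijective.mp hinj
  have hfrob : jacobiSum χ₁ χ₂ = jacobiSum (χ₁ ^ n) (χ₂ ^ n) := by
    have := Fintype.sum_bijective _ hbij
      (fun x : F => (χ₁ ^ n) x * (χ₂ ^ n) (1 - x))
      (fun y : F => χ₁ y * χ₂ (1 - y))
      (fun x => by
        congr 1
        · rw [MulChar.pow_apply' χ₁ hnne, map_pow]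
        · rw [MulChar.pow_apply' χ₂ hnne, ← map_pow]
          congr 1
          rw [← hpn, sub_pow_char_pow, one_pow])
    rw [jacobiSum, jacobiSum, ← this]
  have hconj : (starRingEnd ℂ) (jacobiSum χ₁ χ₂) = jacobiSum χ₁⁻¹ χ₂⁻¹ := by
    rw [jacobiSum, jacobiSum, map_sum]
    refine Finset.sum_congr rfl fun x _ => ?_
    rw [map_mul, starRingEnd_apply, starRingEnd_apply,
      MulChar.star_apply' χ₁, MulChar.star_apply' χ₂]
  rw [hconj, hc2', ← hc1]
  conv_lhs => rw [← hc2]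
  exact hfrob.symm
end

section
/- Let ℓ be an odd prime, q an odd prime power with q ≢ 0 (mod ℓ), and suppose the order m of q modulo ℓ is even. Let λ₁ be a multiplicative character of F_{q^m} of order ℓ and λ₂ the quadratic character of F_{q^m}. Then J(λ₁, λ₂) = q^{m/2} (as a complex number, equal to the positive real number q^{m/2}). -/
open Polynomial in
/-- If an integer `c` is divisible by `ζ - 1` (with `ζ` a primitive `ℓ`-th root of unity,
`ℓ` prime) in `ℤ[ζ] ⊆ ℂ`, then `ℓ ∣ c`. -/
private lemma aux_dvd_of_sub_one_mul {ℓ : ℕ} (hℓ : ℓ.Prime) {ζ : ℂ} (hζ : IsPrimitiveRoot ζ ℓ)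
    {z : ℂ} (hz : z ∈ Algebra.adjoin ℤ {ζ}) (c : ℤ) (h : (c : ℂ) = (ζ - 1) * z) :
    (ℓ : ℤ) ∣ c := by
  haveI : Fact ℓ.Prime := ⟨hℓ⟩
  rw [Algebra.adjoin_singleton_eq_range_aeval] at hz
  obtain ⟨P, hP⟩ := hz
  have hint : IsIntegral ℤ ζ := hζ.isIntegral hℓ.pos
  have hP' : (Polynomial.aeval ζ) P = z := hP
  have hQ : aeval ζ ((X - 1) * P - C c) = 0 := by
    simp only [map_sub, map_mul, map_one, aeval_X, aeval_C, hP', algebraMap_int_eq, eq_intCast, map_intCast]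
    linear_combination -h
  have hdvd : cyclotomic ℓ ℤ ∣ (X - 1) * P - C c := by
    rw [cyclotomic_eq_minpoly hζ hℓ.pos]
    exact minpoly.isIntegrallyClosed_dvd hint hQ
  obtain ⟨R, hR⟩ := hdvd
  have h1 := congrArg (eval 1) hR
  simp only [eval_sub, eval_mul, eval_one, eval_X, eval_C, sub_self, zero_mul, zero_sub,
    eval_one_cyclotomic_prime] at h1
  exact ⟨-(eval 1 R), by linarith⟩

/-- If the order m of q modulo ℓ is even, the Jacobi sum J(λ₁, λ₂) of a character λ₁ of
order ℓ and the quadratic character λ₂ of F_{q^m} equals q^{m/2}. -/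
theorem stmt_4 (q ℓ m : ℕ) (hq : Odd q) (hq' : IsPrimePow q) (hℓ : ℓ.Prime) (hℓodd : Odd ℓ)
    (hqℓ : ¬ ℓ ∣ q) (hm : orderOf (q : ZMod ℓ) = m) (hme : Even m)
    (F : Type*) [Field F] [Fintype F] (hF : Fintype.card F = q ^ m)
    (χ₁ χ₂ : MulChar F ℂ) (h₁ : orderOf χ₁ = ℓ) (h₂ : orderOf χ₂ = 2) :
    jacobiSum χ₁ χ₂ = (q : ℂ) ^ (m / 2) := by
  classical
  haveI : Fact ℓ.Prime := ⟨hℓ⟩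
  obtain ⟨k, hk⟩ := hme
  -- `m` is positive
  have hqu : IsUnit (q : ZMod ℓ) := by
    rw [isUnit_iff_ne_zero, Ne, ZMod.natCast_eq_zero_iff]
    exact hqℓ
  have hm0 : 0 < m := by
    rw [← hm, ← hqu.unit_spec, orderOf_units]
    exact orderOf_pos _
  have hm2 : m / 2 = k := by omega
  -- `q ^ (m/2) ≡ -1 mod ℓ`
  have hxm : (q : ZMod ℓ) ^ m = 1 := hm ▸ pow_orderOf_eq_one _
  have hy2 : ((q : ZMod ℓ) ^ (m / 2)) ^ 2 = 1 := by
    rw [← pow_mul, show m / 2 * 2 = m by omega]; exact hxm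
  have hyne : (q : ZMod ℓ) ^ (m / 2) ≠ 1 :=
    pow_ne_one_of_lt_orderOf (by omega) (by rw [hm]; omega)
  have hyneg : (q : ZMod ℓ) ^ (m / 2) = -1 := by
    have h0 : ((q : ZMod ℓ) ^ (m / 2) - 1) * ((q : ZMod ℓ) ^ (m / 2) + 1) = 0 := by
      linear_combination hy2
    rcases mul_eq_zero.mp h0 with h | h
    · exact absurd (sub_eq_zero.mp h) hyne
    · exact eq_neg_of_add_eq_zero_left h
  have hdvd1 : ℓ ∣ q ^ (m / 2) + 1 := by
    have : ((q ^ (m / 2) + 1 : ℕ) : ZMod ℓ) = 0 := by push_cast [hyneg]; ring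
    exact (ZMod.natCast_eq_zero_iff _ _).mp this
  -- characteristic of `F`
  obtain ⟨p, a, hpp, ha, hqpa⟩ := hq'
  have hp : p.Prime := hpp.nat_prime
  have hcard : Fintype.card F = p ^ (a * m) := by rw [hF, ← hqpa, ← pow_mul]
  obtain ⟨n, hrp, hcard'⟩ := FiniteField.card F (ringChar F)
  have hpr : p = ringChar F := by
    have h1 : p ∣ ringChar F ^ (n : ℕ) := by
      rw [← hcard', hcard]
      exact dvd_pow_self p (Nat.mul_ne_zero ha.ne' hm0.ne')
    exact (Nat.prime_dvd_prime_iff_eq hp hrp).mp (hp.dvd_of_dvd_pow h1)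
  haveI hcharp : CharP F p := hpr ▸ ringChar.charP F
  haveI : ExpChar F p := ExpChar.prime hp
  -- the Frobenius `x ↦ x ^ (q ^ (m/2))`
  set φ : F →+* F := iterateFrobenius F p (a * (m / 2)) with hφ
  have hq₀p : q ^ (m / 2) = p ^ (a * (m / 2)) := by rw [← hqpa, ← pow_mul]
  have hφdef : ∀ x : F, φ x = x ^ q ^ (m / 2) := by
    intro x; rw [hφ, iterateFrobenius_def, hq₀p]
  have hbij : Function.Bijective φ := Finite.injective_iff_bijective.mp φ.injective
  -- characters are nontrivial
  have hχ₁ne : χ₁ ≠ 1 := by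
    intro h; rw [h, orderOf_one] at h₁; exact hℓ.one_lt.ne h₁
  have hχ₂ne : χ₂ ≠ 1 := by
    intro h; rw [h, orderOf_one] at h₂; omega
  have hℓ2 : ℓ ≠ 2 := by
    rw [Nat.odd_iff] at hℓodd; omega
  have hχ₁χ₂ : χ₁ * χ₂ ≠ 1 := by
    intro h
    have h' : χ₂ = χ₁⁻¹ := by
      rw [eq_inv_iff_mul_eq_one, mul_comm]; exact h
    rw [h', orderOf_inv, h₁] at h₂
    exact hℓ2 h₂
  have hℓχ : χ₁ ^ ℓ = 1 := h₁ ▸ pow_orderOf_eq_one χ₁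
  have h2χ : χ₂ ^ 2 = 1 := h₂ ▸ pow_orderOf_eq_one χ₂
  have hval1 : ∀ x : F, x ≠ 0 → χ₁ x ^ ℓ = 1 := by
    intro x hx
    rw [← MulChar.pow_apply' χ₁ hℓ.ne_zero, hℓχ, MulChar.one_apply (isUnit_iff_ne_zero.mpr hx)]
  have hval2 : ∀ x : F, x ≠ 0 → χ₂ x ^ 2 = 1 := by
    intro x hx
    rw [← MulChar.pow_apply' χ₂ two_ne_zero, h2χ, MulChar.one_apply (isUnit_iff_ne_zero.mpr hx)]
  have hq₀ne : q ^ (m / 2) ≠ 0 := by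
    have := hq.pos; positivity
  -- action of Frobenius on the characters
  have hK1 : ∀ x : F, χ₁ (x ^ q ^ (m / 2)) = (χ₁ x)⁻¹ := by
    intro x
    rcases eq_or_ne x 0 with rfl | hx
    · rw [zero_pow hq₀ne, MulChar.map_zero, inv_zero]
    · rw [map_pow]
      obtain ⟨c, hc⟩ := hdvd1
      have h1 : χ₁ x ^ (q ^ (m / 2) + 1) = 1 := by
        rw [hc, pow_mul, hval1 x hx, one_pow]
      exact eq_inv_of_mul_eq_one_left (by rw [← pow_succ]; exact h1)
  have hK2 : ∀ x : F, χ₂ (x ^ q ^ (m / 2)) = χ₂ x := by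
    intro x
    rcases eq_or_ne x 0 with rfl | hx
    · rw [zero_pow hq₀ne]
    · rw [map_pow]
      obtain ⟨t, ht⟩ := hq.pow (n := m / 2)
      rw [ht, pow_succ, pow_mul, hval2 x hx, one_pow, one_mul]
  -- Frobenius invariance of the Jacobi sum
  have hfrob : jacobiSum χ₁⁻¹ χ₂⁻¹ = jacobiSum χ₁ χ₂ := by
    have hinv2 : χ₂⁻¹ = χ₂ := by
      rw [inv_eq_iff_mul_eq_one, ← sq]; exact h2χ
    rw [hinv2, jacobiSum, jacobiSum]
    rw [← hbij.sum_comp fun x => χ₁ x * χ₂ (1 - x)]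
    refine Fintype.sum_congr _ _ fun x => ?_
    have h1x : (1 : F) - φ x = φ (1 - x) := by rw [map_sub, map_one]
    rw [MulChar.inv_apply_eq_inv', h1x, hφdef, hφdef, hK1, hK2]
  -- `J(χ₁,χ₂)^2 = q^m`
  have hchar : ringChar ℂ ≠ ringChar F := by
    rw [ringChar.eq_zero, ← hpr]
    exact fun h => hp.ne_zero h.symm
  have hsq : jacobiSum χ₁ χ₂ * jacobiSum χ₁ χ₂ = ((q : ℂ) ^ (m / 2)) ^ 2 := by
    have h0 := jacobiSum_mul_jacobiSum_inv hchar hχ₁ne hχ₂ne hχ₁χ₂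
    rw [hfrob] at h0
    rw [h0, hF]
    push_cast
    rw [← pow_mul]
    congr 1
    omega
  have hcases : jacobiSum χ₁ χ₂ = (q : ℂ) ^ (m / 2) ∨
      jacobiSum χ₁ χ₂ = -((q : ℂ) ^ (m / 2)) := by
    have h0 : (jacobiSum χ₁ χ₂ - (q : ℂ) ^ (m / 2)) * (jacobiSum χ₁ χ₂ + (q : ℂ) ^ (m / 2)) = 0 := by
      linear_combination hsq
    rcases mul_eq_zero.mp h0 with h | h
    · exact Or.inl (sub_eq_zero.mp h)
    · exact Or.inr (eq_neg_of_add_eq_zero_left h)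
  rcases hcases with h | h
  · exact h
  exfalso
  -- the congruence argument ruling out `J = -q^(m/2)`
  set ζ : ℂ := Complex.exp (2 * Real.pi * Complex.I / ℓ) with hζdef
  have hζ : IsPrimitiveRoot ζ ℓ := Complex.isPrimitiveRoot_exp ℓ hℓ.ne_zero
  have hζmem : ζ ∈ Algebra.adjoin ℤ {ζ} := Algebra.self_mem_adjoin_singleton ℤ ζ
  have hχ₂mem : ∀ v : F, χ₂ v ∈ Algebra.adjoin ℤ {ζ} := by
    intro v
    rcases eq_or_ne v 0 with rfl | hv
    · rw [MulChar.map_zero]; exact Subalgebra.zero_mem _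
    · have h0 : (χ₂ v - 1) * (χ₂ v + 1) = 0 := by linear_combination hval2 v hv
      rcases mul_eq_zero.mp h0 with h' | h'
      · rw [sub_eq_zero.mp h']; exact Subalgebra.one_mem _
      · rw [eq_neg_of_add_eq_zero_left h']
        exact Subalgebra.neg_mem _ (Subalgebra.one_mem _)
  haveI : NeZero ℓ := ⟨hℓ.ne_zero⟩
  have hterm : ∀ x : F, ∃ z ∈ Algebra.adjoin ℤ {ζ},
      χ₁ x * χ₂ (1 - x) = (ζ - 1) * z + χ₂ (1 - x) + (if x = 0 then -1 else 0) := by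
    intro x
    rcases eq_or_ne x 0 with rfl | hx
    · refine ⟨0, Subalgebra.zero_mem _, ?_⟩
      rw [MulChar.map_zero, if_pos rfl, sub_zero, map_one]
      ring
    · obtain ⟨j, hj, hjeq⟩ := MulChar.exists_apply_eq_pow hℓχ hζ hx
      refine ⟨(∑ i ∈ Finset.range j, ζ ^ i) * χ₂ (1 - x), ?_, ?_⟩
      · exact Subalgebra.mul_mem _
          (Subalgebra.sum_mem _ fun i _ => Subalgebra.pow_mem _ hζmem i) (hχ₂mem _)
      · rw [if_neg hx, add_zero, hjeq]
        have hgeo : (∑ i ∈ Finset.range j, ζ ^ i) * (ζ - 1) = ζ ^ j - 1 := geom_sum_mul ζ j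
        linear_combination (-(χ₂ (1 - x))) * hgeo
  choose zf hzf hzeq using hterm
  have hsum2 : ∑ x : F, χ₂ (1 - x) = 0 := by
    rw [show (∑ x : F, χ₂ (1 - x)) = ∑ x : F, χ₂ x from Equiv.sum_comp (Equiv.subLeft 1) χ₂]
    exact MulChar.sum_eq_zero_of_ne_one hχ₂ne
  have hite : (∑ x : F, if x = 0 then (-1 : ℂ) else 0) = -1 := by
    rw [Finset.sum_ite_eq' Finset.univ (0 : F) fun _ => (-1 : ℂ)]
    simp
  have hJ : jacobiSum χ₁ χ₂ = (ζ - 1) * (∑ x : F, zf x) + (-1) := by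
    rw [jacobiSum, Finset.sum_congr rfl fun x _ => hzeq x, Finset.sum_add_distrib,
      Finset.sum_add_distrib, ← Finset.mul_sum, hsum2, add_zero, hite]
  have hc : ((1 - (q ^ (m / 2) : ℕ) : ℤ) : ℂ) = (ζ - 1) * (∑ x : F, zf x) := by
    push_cast
    linear_combination hJ - h
  have hZmem : (∑ x : F, zf x) ∈ Algebra.adjoin ℤ {ζ} :=
    Subalgebra.sum_mem _ fun x _ => hzf x
  have hdvd2 : (ℓ : ℤ) ∣ 1 - (q ^ (m / 2) : ℕ) := aux_dvd_of_sub_one_mul hℓ hζ hZmem _ hc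
  have hdvd3 : (ℓ : ℤ) ∣ 2 := by
    have h4 : (ℓ : ℤ) ∣ ((q ^ (m / 2) + 1 : ℕ) : ℤ) := Int.natCast_dvd_natCast.mpr hdvd1
    have h5 := dvd_add hdvd2 h4
    have h6 : (1 - (q ^ (m / 2) : ℕ) : ℤ) + ((q ^ (m / 2) + 1 : ℕ) : ℤ) = 2 := by push_cast; ring
    rwa [h6] at h5
  have hdvd4 : ℓ ∣ 2 := by exact_mod_cast hdvd3
  exact hℓ2 ((Nat.prime_dvd_prime_iff_eq hℓ Nat.prime_two).mp hdvd4)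
end

section
/- Let q be an odd prime power, ℓ an odd prime with gcd(q, ℓ) = 1, and m the order of q modulo ℓ, with m even. Define S_{rm} = (-1)^{r-1}(ℓ-1) q^{rm/2} for r ≥ 1 and S_t = 0 if m ∤ t, and define c_0 = 1 and t·c_t = Σ_{i=1}^{t} S_i c_{t-i} for t ≥ 1. Then c_{rm} = C((ℓ-1)/m, r) · q^{rm/2} for all r ≥ 0, where C(·,·) denotes the binomial coefficient. -/
open Finset

private lemma alt_sum_A (d n : ℕ) :
    ∑ k ∈ range (n+1), (-1:ℤ)^k * ((d+1).choose k : ℤ) = (-1)^n * (d.choose n : ℤ) := by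
  induction n with
  | zero => simp
  | succ n ih =>
    rw [Finset.sum_range_succ, ih, Nat.choose_succ_succ]
    push_cast
    rw [pow_succ]
    ring

private lemma alt_sum_B (d n : ℕ) :
    ∑ j ∈ Icc 1 (n+1), (-1:ℤ)^(j-1) * ((d+1).choose (n+1-j) : ℤ) = (d.choose n : ℤ) := by
  have h1 : ∑ j ∈ Icc 1 (n+1), (-1:ℤ)^(j-1) * ((d+1).choose (n+1-j) : ℤ)
      = ∑ i ∈ range (n+1), (-1:ℤ)^i * ((d+1).choose (n-i) : ℤ) := by
    apply Finset.sum_nbij' (i := fun j => j - 1) (j := fun k => k + 1)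
    · intro a ha; simp only [mem_Icc] at ha; simp only [mem_range]; omega
    · intro a ha; simp only [mem_range] at ha; simp only [mem_Icc]; omega
    · intro a ha; simp only [mem_Icc] at ha; omega
    · intro a ha; omega
    · intro a ha
      simp only [mem_Icc] at ha
      rw [show n + 1 - a = n - (a - 1) by omega]
  have h2 : ∀ i ∈ range (n+1), (-1:ℤ)^i * ((d+1).choose (n-i) : ℤ)
      = (-1:ℤ)^n * ((-1:ℤ)^(n-i) * ((d+1).choose (n-i) : ℤ)) := by
    intro i hi
    simp only [mem_range] at hi
    have hs : (-1:ℤ)^n * (-1:ℤ)^(n-i) = (-1:ℤ)^i := by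
      rw [← pow_add, show n + (n-i) = 2*(n-i) + i by omega, pow_add, pow_mul]
      norm_num
    rw [← hs]; ring
  rw [h1, Finset.sum_congr rfl h2, ← Finset.mul_sum]
  have hrefl := Finset.sum_range_reflect (fun k => (-1:ℤ)^k * ((d+1).choose k : ℤ)) (n+1)
  simp only [Nat.add_sub_cancel] at hrefl
  rw [hrefl, alt_sum_A, ← mul_assoc, ← pow_add,
    Even.neg_one_pow ⟨n, rfl⟩, one_mul]


/-- With m the (even) order of q modulo ℓ, the Newton-type recursion
c₀ = 1, t·c_t = Σ_{i=1}^t S_i c_{t-i}, where S_{rm} = (-1)^{r-1}(ℓ-1)q^{rm/2} and S_t = 0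
for m ∤ t, has solution c_{rm} = C((ℓ-1)/m, r)·q^{rm/2} for all r ≥ 0. -/
theorem stmt_10 (q ℓ m : ℕ) (hq : Odd q) (hq' : IsPrimePow q) (hℓ : ℓ.Prime)
    (hℓodd : Odd ℓ) (hqℓ : Nat.gcd q ℓ = 1) (hm : orderOf (q : ZMod ℓ) = m)
    (hme : Even m)
    (S c : ℕ → ℤ)
    (hS : ∀ r : ℕ, 1 ≤ r → S (r * m) = (-1) ^ (r - 1) * ((ℓ : ℤ) - 1) * (q : ℤ) ^ (r * m / 2))
    (hS0 : ∀ t : ℕ, ¬ m ∣ t → S t = 0)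
    (hc0 : c 0 = 1)
    (hrec : ∀ t : ℕ, 1 ≤ t → (t : ℤ) * c t = ∑ i ∈ Finset.Icc 1 t, S i * c (t - i)) :
    ∀ r : ℕ, c (r * m) = (Nat.choose ((ℓ - 1) / m) r : ℤ) * (q : ℤ) ^ (r * m / 2) := by
  have hℓ2 : 2 ≤ ℓ := hℓ.two_le
  have hℓ3 : 3 ≤ ℓ := by
    rcases hℓodd with ⟨k, hk⟩; omega
  haveI : Fact ℓ.Prime := ⟨hℓ⟩
  have hunit : (q : ZMod ℓ) ≠ 0 := by
    rw [Ne, ZMod.natCast_eq_zero_iff]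
    intro h
    have h1 : ℓ ∣ Nat.gcd q ℓ := Nat.dvd_gcd h dvd_rfl
    rw [hqℓ] at h1
    have := Nat.le_of_dvd one_pos h1
    omega
  have hmdvd : m ∣ ℓ - 1 := by
    rw [← hm]
    exact orderOf_dvd_of_pow_eq_one (ZMod.pow_card_sub_one_eq_one hunit)
  have hm0 : 0 < m := by
    rcases Nat.eq_zero_or_pos m with rfl | h
    · have := Nat.eq_zero_of_zero_dvd hmdvd; omega
    · exact h
  set d := (ℓ - 1) / m with hd
  have hdm : d * m = ℓ - 1 := Nat.div_mul_cancel hmdvd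
  have hd1 : 1 ≤ d := by
    rcases Nat.eq_zero_or_pos d with h | h
    · rw [h, zero_mul] at hdm; omega
    · exact h
  obtain ⟨e, he⟩ := hme
  have he2 : m = 2 * e := by omega
  have half : ∀ a : ℕ, a * m / 2 = a * e := by
    intro a
    rw [he2, show a * (2 * e) = a * e * 2 by ring, Nat.mul_div_cancel _ two_pos]
  -- main strong induction
  have key : ∀ t : ℕ, c t = if m ∣ t then ((d.choose (t / m) : ℤ) * (q:ℤ)^(t / m * e)) else 0 := by
    intro t
    induction t using Nat.strong_induction_on with
    | _ t ih =>
    rcases Nat.eq_zero_or_pos t with rfl | ht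
    · simp [hc0, Nat.zero_div]
    have hrec' := hrec t ht
    have htz : (t : ℤ) ≠ 0 := by exact_mod_cast Nat.pos_iff_ne_zero.mp ht
    have hsum : ∑ i ∈ Icc 1 t, S i * c (t - i)
        = ∑ j ∈ Icc 1 (t / m), S (j * m) * c (t - j * m) := by
      rw [← Finset.sum_image (g := fun j => j * m) (f := fun i => S i * c (t - i))
        (fun a _ b _ h => Nat.eq_of_mul_eq_mul_right hm0 h)]
      symm
      apply Finset.sum_subset
      · intro i hi
        simp only [mem_image, mem_Icc] at hi ⊢
        obtain ⟨j, ⟨hj1, hj2⟩, rfl⟩ := hi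
        have h1 : 1 ≤ j * m := Nat.mul_pos hj1 hm0
        exact ⟨h1, (Nat.le_div_iff_mul_le hm0).mp hj2⟩
      · intro i hi hni
        simp only [mem_Icc] at hi
        have hmi : ¬ m ∣ i := by
          rintro ⟨j, rfl⟩
          apply hni
          apply Finset.mem_image.mpr
          have hj0 : 0 < j := by
            rcases Nat.eq_zero_or_pos j with rfl | h
            · simp at hi
            · exact h
          refine ⟨j, Finset.mem_Icc.mpr ⟨hj0, (Nat.le_div_iff_mul_le hm0).mpr ?_⟩, mul_comm j m⟩
          rw [mul_comm j m]; exact hi.2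
        rw [hS0 i hmi, zero_mul]
    by_cases hdvd : m ∣ t
    · -- divisible case
      obtain ⟨r, hr⟩ := hdvd
      have hrm : r * m = t := by rw [mul_comm]; omega
      have hr1 : 1 ≤ r := by
        rcases Nat.eq_zero_or_pos r with rfl | h
        · simp at hrm; omega
        · exact h
      have htdiv : t / m = r := by rw [← hrm, Nat.mul_div_cancel _ hm0]
      rw [if_pos ⟨r, hr⟩, htdiv]
      have hterm : ∀ j ∈ Icc 1 r, S (j * m) * c (t - j * m)
          = ((ℓ:ℤ) - 1) * (q:ℤ)^(r * e) * ((-1:ℤ)^(j-1) * (d.choose (r - j) : ℤ)) := by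
        intro j hj
        simp only [mem_Icc] at hj
        have hjm : j * m ≤ t := by rw [← hrm]; exact Nat.mul_le_mul_right m hj.2
        have hlt : t - j * m < t := by
          have h1 : 0 < j * m := Nat.mul_pos hj.1 hm0
          omega
        have hsub : t - j * m = (r - j) * m := by rw [← hrm, ← Nat.sub_mul]
        have hc' := ih _ hlt
        rw [hsub] at hc'
        rw [if_pos (dvd_mul_left m (r - j)), Nat.mul_div_cancel _ hm0] at hc'
        rw [hsub, hc', hS j hj.1, half j]
        have hexp : (q:ℤ)^(j*e) * (q:ℤ)^((r-j)*e) = (q:ℤ)^(r*e) := by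
          rw [← pow_add, ← Nat.add_mul, Nat.add_sub_cancel' hj.2]
        calc (-1:ℤ)^(j-1) * ((ℓ:ℤ) - 1) * (q:ℤ)^(j*e) * ((d.choose (r-j) : ℤ) * (q:ℤ)^((r-j)*e))
            = ((ℓ:ℤ) - 1) * ((q:ℤ)^(j*e) * (q:ℤ)^((r-j)*e)) * ((-1:ℤ)^(j-1) * (d.choose (r-j) : ℤ)) := by ring
          _ = ((ℓ:ℤ) - 1) * (q:ℤ)^(r*e) * ((-1:ℤ)^(j-1) * (d.choose (r-j) : ℤ)) := by rw [hexp]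
      rw [hsum, htdiv, Finset.sum_congr rfl hterm, ← Finset.mul_sum] at hrec'
      have hB : ∑ j ∈ Icc 1 r, (-1:ℤ)^(j-1) * (d.choose (r - j) : ℤ) = ((d-1).choose (r-1) : ℤ) := by
        have := alt_sum_B (d-1) (r-1)
        rw [show d - 1 + 1 = d by omega, show r - 1 + 1 = r by omega] at this
        exact this
      rw [hB] at hrec'
      -- nat identity
      have hnat : d * (d-1).choose (r-1) = d.choose r * r := by
        have h := Nat.add_one_mul_choose_eq (d-1) (r-1)
        simp only [Nat.succ_eq_add_one, show d - 1 + 1 = d by omega,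
          show r - 1 + 1 = r by omega] at h
        exact h
      have hnatZ : (d:ℤ) * ((d-1).choose (r-1) : ℤ) = (d.choose r : ℤ) * r := by
        exact_mod_cast congrArg (Nat.cast : ℕ → ℤ) hnat
      have hl1 : (ℓ:ℤ) - 1 = (d:ℤ) * (m:ℤ) := by
        have h2 : ((d * m : ℕ) : ℤ) = ((ℓ - 1 : ℕ) : ℤ) := by rw [hdm]
        push_cast at h2
        omega
      have htZ : (t:ℤ) = (r:ℤ) * (m:ℤ) := by exact_mod_cast hrm.symm
      apply mul_left_cancel₀ htz
      rw [hrec', hl1, htZ]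
      linear_combination ((m:ℤ) * (q:ℤ)^(r*e)) * hnatZ
    · -- non-divisible case
      rw [if_neg hdvd]
      have hz : ∀ j ∈ Icc 1 (t / m), S (j * m) * c (t - j * m) = 0 := by
        intro j hj
        simp only [mem_Icc] at hj
        have hjm : j * m ≤ t := (Nat.le_div_iff_mul_le hm0).mp hj.2
        have h1 : 0 < j * m := Nat.mul_pos hj.1 hm0
        have hlt : t - j * m < t := by omega
        have hnd : ¬ m ∣ (t - j * m) := by
          intro hk
          apply hdvd
          have h2 : t = (t - j * m) + j * m := by omega
          rw [h2]
          exact dvd_add hk (dvd_mul_left m j)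
        rw [ih _ hlt, if_neg hnd, mul_zero]
      rw [hsum, Finset.sum_eq_zero hz] at hrec'
      rcases mul_eq_zero.mp hrec' with h | h
      · exact absurd h htz
      · exact h
  intro r
  have := key (r * m)
  rw [if_pos (dvd_mul_left m r), Nat.mul_div_cancel _ hm0, ← half r] at this
  exact this
end

section
/- Let q be an odd prime power with q ≡ 1 (mod 5). Let λ₁ be a multiplicative character of F_q of order 5 and λ₂ the quadratic character, and write J(λ₁,λ₂) = Σ_{i=1}^{5} a_i ζ^i with ζ = e^{2πi/5} and a_i ∈ Z defined as signed counts: a_i = #{c : λ₁(c)=ζ^i, λ₂(1-c)=1} − #{c : λ₁(c)=ζ^i, λ₂(1-c)=-1}. Then q = Σ_{i=1}^{5} a_i² − (1/2) Σ_{1≤i<j≤5} a_i a_j. -/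
open Finset

/-- For q ≡ 1 (mod 5), with a₁,…,a₅ the signed-count integer coefficients of
J(λ₁,λ₂) = Σ aᵢ ζ^i (λ₁ of order 5, λ₂ quadratic, ζ = e^{2πi/5}), one has
q = Σ aᵢ² − (1/2) Σ_{i<j} aᵢaⱼ. -/
theorem stmt_15 (q : ℕ) (hq : Odd q) (hq' : IsPrimePow q) (hq5 : q % 5 = 1)
    (F : Type*) [Field F] [Fintype F] (hF : Fintype.card F = q)
    (χ₁ χ₂ : MulChar F ℂ) (h₁ : orderOf χ₁ = 5) (h₂ : orderOf χ₂ = 2)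
    (ζ : ℂ) (hζ : ζ = Complex.exp (2 * Real.pi * Complex.I / 5))
    (a : ℕ → ℤ)
    (ha : ∀ i, a i =
      ({c : F | c ≠ 0 ∧ c ≠ 1 ∧ χ₁ c = ζ ^ i ∧ χ₂ (1 - c) = 1}.ncard : ℤ) -
      ({c : F | c ≠ 0 ∧ c ≠ 1 ∧ χ₁ c = ζ ^ i ∧ χ₂ (1 - c) = -1}.ncard : ℤ)) :
    (q : ℚ) = ∑ i ∈ Finset.Icc 1 5, (a i : ℚ) ^ 2 -
      (1 / 2) * ∑ i ∈ Finset.Icc 1 5, ∑ j ∈ Finset.Icc (i + 1) 5, (a i : ℚ) * (a j : ℚ) := by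
  classical
  have hprim : IsPrimitiveRoot ζ 5 := hζ ▸ Complex.isPrimitiveRoot_exp 5 (by norm_num)
  have hζ5 : ζ ^ 5 = 1 := hprim.pow_eq_one
  have hsum : 1 + ζ + ζ ^ 2 + ζ ^ 3 + ζ ^ 4 = 0 := by
    have := hprim.geom_sum_eq_zero (by norm_num)
    simp [Finset.sum_range_succ] at this
    linear_combination this
  -- distinctness of ζ^i for i ∈ [1,5]
  have hmod : ∀ i : ℕ, ζ ^ i = ζ ^ (i % 5) := by
    intro i
    conv_lhs => rw [← Nat.div_add_mod i 5]
    rw [pow_add, pow_mul, hζ5, one_pow, one_mul]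
  have hdist : ∀ i ∈ Finset.Icc 1 5, ∀ j ∈ Finset.Icc 1 5, ζ ^ i = ζ ^ j → i = j := by
    intro i hi j hj h
    rw [hmod i, hmod j] at h
    have := hprim.pow_inj (Nat.mod_lt _ (by norm_num)) (Nat.mod_lt _ (by norm_num)) h
    simp only [Finset.mem_Icc] at hi hj
    omega
  -- χ₁ values are powers of ζ
  have hχ₁pow : ∀ c : F, c ≠ 0 → ∃ i ∈ Finset.Icc 1 5, χ₁ c = ζ ^ i := by
    intro c hc
    have h5 : (χ₁ c) ^ 5 = 1 := by
      rw [← MulChar.pow_apply' χ₁ (by norm_num) c, ← h₁, pow_orderOf_eq_one,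
        MulChar.one_apply (isUnit_iff_ne_zero.mpr hc)]
    obtain ⟨i, hi, hpow⟩ := hprim.eq_pow_of_pow_eq_one h5
    rcases Nat.eq_zero_or_pos i with rfl | hipos
    · exact ⟨5, by simp, by rw [← hpow, pow_zero, ← hζ5]⟩
    · exact ⟨i, Finset.mem_Icc.mpr ⟨hipos, by omega⟩, hpow.symm⟩
  -- χ₂ values are ±1
  have hχ₂pm : ∀ x : F, x ≠ 0 → χ₂ x = 1 ∨ χ₂ x = -1 := by
    intro x hx
    have h2 : (χ₂ x) ^ 2 = 1 := by
      rw [← MulChar.pow_apply' χ₂ (by norm_num) x, ← h₂, pow_orderOf_eq_one,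
        MulChar.one_apply (isUnit_iff_ne_zero.mpr hx)]
    exact sq_eq_one_iff.mp h2
  -- the finset of relevant c
  have hT : ∀ c : F, c ∈ Finset.univ \ ({0, 1} : Finset F) ↔ c ≠ 0 ∧ c ≠ 1 := by
    intro c; simp
  set T : Finset F := Finset.univ \ ({0, 1} : Finset F) with hTdef
  have hJ : jacobiSum χ₁ χ₂ = ∑ i ∈ Finset.Icc 1 5, (a i : ℂ) * ζ ^ i := by
    rw [jacobiSum_eq_sum_sdiff]
    have step1 : ∀ c ∈ T, χ₁ c * χ₂ (1 - c) =
        ∑ i ∈ Finset.Icc 1 5, (if χ₁ c = ζ ^ i then ζ ^ i * χ₂ (1 - c) else 0) := by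
      intro c hc
      obtain ⟨hc0, hc1⟩ := (hT c).mp hc
      obtain ⟨i₀, hi₀, hval⟩ := hχ₁pow c hc0
      rw [Finset.sum_eq_single_of_mem i₀ hi₀]
      · rw [if_pos hval, hval]
      · intro j hj hne
        rw [if_neg]
        intro hcontra
        exact hne (hdist j hj i₀ hi₀ (hcontra ▸ hval))
    rw [Finset.sum_congr rfl step1, Finset.sum_comm]
    refine Finset.sum_congr rfl fun i _ => ?_
    have hsplit : ∀ c ∈ T, (if χ₁ c = ζ ^ i then ζ ^ i * χ₂ (1 - c) else 0) =
        ζ ^ i * ((if χ₁ c = ζ ^ i ∧ χ₂ (1 - c) = 1 then (1:ℂ) else 0)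
          - (if χ₁ c = ζ ^ i ∧ χ₂ (1 - c) = -1 then (1:ℂ) else 0)) := by
      intro c hc
      obtain ⟨hc0, hc1⟩ := (hT c).mp hc
      have h1c : (1:F) - c ≠ 0 := sub_ne_zero.mpr (Ne.symm hc1)
      by_cases h : χ₁ c = ζ ^ i
      · rcases hχ₂pm _ h1c with h2 | h2
        · rw [if_pos h, if_pos ⟨h, h2⟩, if_neg (fun hh => by
            rw [h2] at hh; norm_num at hh), h2]
          ring
        · rw [if_pos h, if_neg (fun hh => by
            rw [h2] at hh; norm_num at hh), if_pos ⟨h, h2⟩, h2]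
          ring
      · simp [h]
    rw [Finset.sum_congr rfl hsplit, ← Finset.mul_sum, Finset.sum_sub_distrib,
      Finset.sum_boole, Finset.sum_boole]
    have hAcard : {c : F | c ≠ 0 ∧ c ≠ 1 ∧ χ₁ c = ζ ^ i ∧ χ₂ (1 - c) = 1}.ncard
        = (T.filter fun c => χ₁ c = ζ ^ i ∧ χ₂ (1 - c) = 1).card := by
      rw [← Set.ncard_coe_finset]
      congr 1
      ext c
      simp only [Set.mem_setOf_eq, Finset.coe_filter, Finset.mem_coe, hT c]
      tauto
    have hBcard : {c : F | c ≠ 0 ∧ c ≠ 1 ∧ χ₁ c = ζ ^ i ∧ χ₂ (1 - c) = -1}.ncard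
        = (T.filter fun c => χ₁ c = ζ ^ i ∧ χ₂ (1 - c) = -1).card := by
      rw [← Set.ncard_coe_finset]
      congr 1
      ext c
      simp only [Set.mem_setOf_eq, Finset.coe_filter, Finset.mem_coe, hT c]
      tauto
    have := ha i
    rw [hAcard, hBcard] at this
    push_cast [this]
    ring
  -- nontriviality facts
  have hχ₁ne : χ₁ ≠ 1 := fun h => by rw [h, orderOf_one] at h₁; norm_num at h₁
  have hχ₁χ₂ne : χ₁ * χ₂ ≠ 1 := by
    intro h
    have hinv : χ₁ = χ₂⁻¹ := eq_inv_of_mul_eq_one_left h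
    rw [hinv, orderOf_inv, h₂] at h₁
    norm_num at h₁
  have hcharF : ringChar ℂ ≠ ringChar F := by
    intro h
    exact CharP.char_ne_zero_of_finite F (ringChar F) (by rw [← h, ringChar.eq_zero])
  -- inverse characters are conjugates
  have hinvconj : ∀ (χ : MulChar F ℂ) (n : ℕ), n ≠ 0 → χ ^ n = 1 → ∀ x : F,
      χ⁻¹ x = (starRingEnd ℂ) (χ x) := by
    intro χ n hn hχn x
    rcases eq_or_ne x 0 with rfl | hx
    · rw [MulChar.map_nonunit _ not_isUnit_zero, MulChar.map_nonunit _ not_isUnit_zero, map_zero]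
    · rw [MulChar.inv_apply_eq_inv']
      have hpow : (χ x) ^ n = 1 := by
        rw [← MulChar.pow_apply' χ hn x, hχn, MulChar.one_apply (isUnit_iff_ne_zero.mpr hx)]
      exact Complex.inv_eq_conj (Complex.norm_eq_one_of_pow_eq_one hpow hn)
  have hconj : jacobiSum χ₁⁻¹ χ₂⁻¹ = (starRingEnd ℂ) (jacobiSum χ₁ χ₂) := by
    simp only [jacobiSum, map_sum, map_mul]
    refine Finset.sum_congr rfl fun x _ => ?_
    rw [hinvconj χ₁ 5 (by norm_num) (by rw [← h₁]; exact pow_orderOf_eq_one χ₁) x,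
        hinvconj χ₂ 2 (by norm_num) (by rw [← h₂]; exact pow_orderOf_eq_one χ₂) (1 - x)]
  have hqc : (∑ i ∈ Finset.Icc 1 5, (a i : ℂ) * ζ ^ i) *
      (∑ i ∈ Finset.Icc 1 5, (a i : ℂ) * (ζ ^ 4) ^ i) = (q : ℂ) := by
    have hmain := jacobiSum_mul_jacobiSum_inv hcharF hχ₁ne (fun h => by rw [h, orderOf_one] at h₂; norm_num at h₂) hχ₁χ₂ne
    rw [hconj, hJ, hF] at hmain
    rw [← hmain]
    have hcz : (starRingEnd ℂ) ζ = ζ ^ 4 := by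
      rw [← Complex.inv_eq_conj (Complex.norm_eq_one_of_pow_eq_one hζ5 (by norm_num))]
      exact inv_eq_of_mul_eq_one_right (by linear_combination hζ5)
    congr 1
    rw [map_sum]
    refine Finset.sum_congr rfl fun i _ => ?_
    rw [map_mul, map_pow, map_intCast, hcz]
  -- explicit expansion of the complex identity
  have hqc2 : ((a 1:ℂ)*ζ + (a 2:ℂ)*ζ^2 + (a 3:ℂ)*ζ^3 + (a 4:ℂ)*ζ^4 + (a 5:ℂ)*ζ^5) *
      ((a 1:ℂ)*ζ^4 + (a 2:ℂ)*(ζ^4)^2 + (a 3:ℂ)*(ζ^4)^3 + (a 4:ℂ)*(ζ^4)^4 + (a 5:ℂ)*(ζ^4)^5)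
      = (q : ℂ) := by
    rw [← hqc, show Finset.Icc 1 5 = ({1,2,3,4,5} : Finset ℕ) from rfl]
    simp [Finset.sum_insert, Finset.mem_insert]
    ring
  set u : ℂ := ζ + ζ ^ 4 with hu
  have hu2 : u ^ 2 = 1 - u := by
    rw [hu]; linear_combination (2 + ζ^3) * hζ5 + hsum
  set Pq : ℚ := (a 1:ℚ)^2 + (a 2:ℚ)^2 + (a 3:ℚ)^2 + (a 4:ℚ)^2 + (a 5:ℚ)^2 with hPdef
  set Qq : ℚ := (a 1:ℚ)*(a 2:ℚ) + (a 1:ℚ)*(a 5:ℚ) + (a 2:ℚ)*(a 3:ℚ) + (a 3:ℚ)*(a 4:ℚ) + (a 4:ℚ)*(a 5:ℚ) with hQdef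
  set Rq : ℚ := (a 1:ℚ)*(a 3:ℚ) + (a 1:ℚ)*(a 4:ℚ) + (a 2:ℚ)*(a 4:ℚ) + (a 2:ℚ)*(a 5:ℚ) + (a 3:ℚ)*(a 5:ℚ) with hRdef
  have key3 : (q:ℂ) = ((Pq:ℂ) - (Rq:ℂ)) + ((Qq:ℂ) - (Rq:ℂ)) * u := by
    rw [hPdef, hQdef, hRdef, hu]
    push_cast
    linear_combination -hqc2 + ((a 1:ℂ)*(a 1:ℂ) + (a 2:ℂ)*(a 2:ℂ) + (a 3:ℂ)*(a 3:ℂ) + (a 4:ℂ)*(a 4:ℂ) + (a 5:ℂ)*(a 5:ℂ) + (a 1:ℂ)*(a 2:ℂ)*ζ^1 + (a 1:ℂ)*(a 5:ℂ)*ζ^1 + (a 2:ℂ)*(a 3:ℂ)*ζ^1 + (a 3:ℂ)*(a 4:ℂ)*ζ^1 + (a 4:ℂ)*(a 5:ℂ)*ζ^1 + (a 1:ℂ)*(a 3:ℂ)*ζ^2 + (a 1:ℂ)*(a 4:ℂ)*ζ^2 + (a 2:ℂ)*(a 4:ℂ)*ζ^2 + (a 2:ℂ)*(a 5:ℂ)*ζ^2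 + (a 3:ℂ)*(a 5:ℂ)*ζ^2 + (a 1:ℂ)*(a 3:ℂ)*ζ^3 + (a 1:ℂ)*(a 4:ℂ)*ζ^3 + (a 2:ℂ)*(a 4:ℂ)*ζ^3 + (a 2:ℂ)*(a 5:ℂ)*ζ^3 + (a 3:ℂ)*(a 5:ℂ)*ζ^3 + (a 1:ℂ)*(a 2:ℂ)*ζ^4 + (a 1:ℂ)*(a 5:ℂ)*ζ^4 + (a 2:ℂ)*(a 3:ℂ)*ζ^4 + (a 3:ℂ)*(a 4:ℂ)*ζ^4 + (a 4:ℂ)*(a 5:ℂ)*ζ^4 + (a 2:ℂ)*(a 2:ℂ)*ζ^5 + (a 3:ℂ)*(a 3:ℂ)*ζ^5 + (a 4:ℂ)*(a 4:ℂ)*ζ^5 + (a 5:ℂ)*(a 5:ℂ)*ζ^5 + (a 1:ℂ)*(a 5:ℂ)*ζ^6 + (a 2:ℂ)*(a 3:ℂ)*ζ^6 + (a 3:ℂ)*(a 4:ℂ)*ζ^6 + (a 4:ℂ)*(a 5:ℂ)*ζ^6 + (a 1:ℂ)*(a 4:ℂ)*ζ^7 + (a 2:ℂ)*(a 4:ℂ)*ζ^7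 + (a 2:ℂ)*(a 5:ℂ)*ζ^7 + (a 3:ℂ)*(a 5:ℂ)*ζ^7 + (a 1:ℂ)*(a 3:ℂ)*ζ^8 + (a 2:ℂ)*(a 4:ℂ)*ζ^8 + (a 2:ℂ)*(a 5:ℂ)*ζ^8 + (a 3:ℂ)*(a 5:ℂ)*ζ^8 + (a 2:ℂ)*(a 3:ℂ)*ζ^9 + (a 3:ℂ)*(a 4:ℂ)*ζ^9 + (a 4:ℂ)*(a 5:ℂ)*ζ^9 + (a 3:ℂ)*(a 3:ℂ)*ζ^10 + (a 4:ℂ)*(a 4:ℂ)*ζ^10 + (a 5:ℂ)*(a 5:ℂ)*ζ^10 + (a 1:ℂ)*(a 5:ℂ)*ζ^11 + (a 3:ℂ)*(a 4:ℂ)*ζ^11 + (a 4:ℂ)*(a 5:ℂ)*ζ^11 + (a 1:ℂ)*(a 4:ℂ)*ζ^12 + (a 2:ℂ)*(a 5:ℂ)*ζ^12 + (a 3:ℂ)*(a 5:ℂ)*ζ^12 + (a 2:ℂ)*(a 4:ℂ)*ζ^13 + (a 3:ℂ)*(a 5:ℂ)*ζ^13 + (a 3:ℂ)*(a 4:ℂ)*ζ^14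 + (a 4:ℂ)*(a 5:ℂ)*ζ^14 + (a 4:ℂ)*(a 4:ℂ)*ζ^15 + (a 5:ℂ)*(a 5:ℂ)*ζ^15 + (a 1:ℂ)*(a 5:ℂ)*ζ^16 + (a 4:ℂ)*(a 5:ℂ)*ζ^16 + (a 2:ℂ)*(a 5:ℂ)*ζ^17 + (a 3:ℂ)*(a 5:ℂ)*ζ^18 + (a 4:ℂ)*(a 5:ℂ)*ζ^19 + (a 5:ℂ)*(a 5:ℂ)*ζ^20) * hζ5 + ((a 1:ℂ)*(a 3:ℂ) + (a 1:ℂ)*(a 4:ℂ) + (a 2:ℂ)*(a 4:ℂ) + (a 2:ℂ)*(a 5:ℂ) + (a 3:ℂ)*(a 5:ℂ)) * hsum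
  by_cases hB : Qq = Rq
  · -- rational case
    have hBc : (Qq:ℂ) = (Rq:ℂ) := by exact_mod_cast hB
    have hfin : (q:ℚ) = Pq - Rq := by
      have h' : ((q:ℚ):ℂ) = ((Pq - Rq : ℚ):ℂ) := by
        push_cast
        linear_combination key3 + u * hBc
      exact_mod_cast h'
    rw [show Finset.Icc 1 5 = ({1,2,3,4,5} : Finset ℕ) from rfl]
    norm_num [Finset.sum_insert, Finset.mem_insert,
        show Finset.Icc 2 5 = ({2,3,4,5} : Finset ℕ) from rfl,
        show Finset.Icc 3 5 = ({3,4,5} : Finset ℕ) from rfl,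
        show Finset.Icc 4 5 = ({4,5} : Finset ℕ) from rfl,
        show Finset.Icc 5 5 = ({5} : Finset ℕ) from rfl,
        show Finset.Icc 6 5 = (∅ : Finset ℕ) from rfl]
    rw [hPdef, hRdef] at hfin
    rw [hQdef, hRdef] at hB
    linear_combination hfin + (1/2) * hB
  · -- irrational case: contradiction
    exfalso
    have h2 : ((q:ℚ) - (Pq - Rq))^2 + ((q:ℚ) - (Pq - Rq))*(Qq - Rq) - (Qq - Rq)^2 = 0 := by
      have h2c : ((((q:ℚ) - (Pq - Rq))^2 + ((q:ℚ) - (Pq - Rq))*(Qq - Rq) - (Qq - Rq)^2 : ℚ) : ℂ)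
          = 0 := by
        push_cast
        linear_combination (((q:ℂ) - ((Pq:ℂ) - (Rq:ℂ))) + ((Qq:ℂ) - (Rq:ℂ)) * u
          + ((Qq:ℂ) - (Rq:ℂ))) * key3 + ((Qq:ℂ) - (Rq:ℂ))^2 * hu2
      exact_mod_cast h2c
    have hBne : Qq - Rq ≠ 0 := sub_ne_zero.mpr hB
    have h5 : (2*((q:ℚ) - (Pq - Rq)) + (Qq - Rq))^2 = 5*(Qq - Rq)^2 := by
      linear_combination 4 * h2
    set t : ℚ := (2*((q:ℚ) - (Pq - Rq)) + (Qq - Rq))/(Qq - Rq) with htdef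
    have ht : t^2 = 5 := by
      rw [htdef, div_pow, div_eq_iff (pow_ne_zero 2 hBne)]
      linear_combination h5
    have htr : ((t:ℝ))^2 = 5 := by exact_mod_cast ht
    have hirr : Irrational (Real.sqrt 5) := by
      simpa using (by norm_num : Nat.Prime 5).irrational_sqrt
    rw [show (5:ℝ) = ((t:ℝ))^2 from htr.symm, Real.sqrt_sq_eq_abs, ← Rat.cast_abs] at hirr
    exact Rat.not_irrational _ hirr
end

section
/- Let q be an odd prime power with q ≡ 1 (mod 7). Let λ₁ be a multiplicative character of F_q of order 7 and λ₂ the quadratic character, and write J(λ₁,λ₂) = Σ_{i=1}^{7} a_i ζ^i with ζ = e^{2πi/7} and a_i ∈ Z the natural signed counts. Then Σ_{i=1}^{7} a_i² = (6q+1)/7 and Σ_{1≤i<j≤7} a_i a_j = (−3q+3)/7. -/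
/-!
For `1 ≤ k ≤ 7` the coefficients `aᵢ` also expand the Jacobi sums of the powers of `λ₁`:
`J(λ₁ᵏ, λ₂) = ∑ aᵢ ζ^{ik}` and `J(λ₁⁻ᵏ, λ₂⁻¹) = ∑ aᵢ ζ^{-ik}`. Their product is `q` for
`k < 7`, while for `k = 7` both sums equal `J(1, λ₂) = ∑ aᵢ = -1`. Summing over `k`, orthogonality
of the characters of `ℤ/7` turns the left-hand side into `7 ∑ aᵢ²`, so `7 ∑ aᵢ² = 6q + 1`; the
pair sum then follows from `(∑ aᵢ)² = 1`.
-/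

open Finset

theorem sq_sum_Icc_eq_sum_sq_add_two_mul {R : Type*} [CommSemiring R] (x : ℕ → R) (m n : ℕ) :
    (∑ i ∈ Icc m n, x i) ^ 2 =
      ∑ i ∈ Icc m n, x i ^ 2 + 2 * ∑ i ∈ Icc m n, ∑ j ∈ Icc (i + 1) n, x i * x j := by
  rcases lt_or_ge n m with h | h
  · simp [Finset.Icc_eq_empty_of_lt h]
  · have hm : m ∉ Icc (m + 1) n := by simp
    rw [← insert_Icc_add_one_left_eq_Icc h, sum_insert hm, sum_insert hm, sum_insert hm,
      add_sq, sq_sum_Icc_eq_sum_sq_add_two_mul x (m + 1) n, ← mul_sum]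
    ring
termination_by n + 1 - m

theorem sum_range_pow_succ_of_pow_eq_one {K : Type*} [Field K] [DecidableEq K] {u : K} {n : ℕ}
    (hu : u ^ n = 1) : ∑ k ∈ range n, u ^ (k + 1) = if u = 1 then (n : K) else 0 := by
  split_ifs with h
  · simp [h]
  · simp_rw [pow_succ', ← mul_sum, geom_sum_eq h, hu, sub_self, zero_div, mul_zero]

-- Exponents run over `1, …, n` rather than `0, …, n - 1` because `(χ ^ 0) 0 = 0` for a
-- multiplicative character, whereas `(χ 0) ^ 0 = 1`.
theorem sum_range_sum_pow_succ_mul_sum_inv_pow_succ {ι K : Type*} [Field K] {s : Finset ι}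
    {w : ι → K} (hw : Set.InjOn w s) {n : ℕ} (hn : ∀ i ∈ s, w i ^ n = 1) (x y : ι → K) :
    ∑ k ∈ range n, (∑ i ∈ s, x i * w i ^ (k + 1)) * (∑ j ∈ s, y j * (w j ^ (k + 1))⁻¹) =
      n * ∑ i ∈ s, x i * y i := by
  classical
  obtain rfl | hn0 := eq_or_ne n 0
  · simp
  have hw0 : ∀ j ∈ s, w j ≠ 0 := fun j hj h0 => by simpa [h0, zero_pow hn0] using hn j hj
  have horth : ∀ i ∈ s, ∀ j ∈ s,
      ∑ k ∈ range n, (w i / w j) ^ (k + 1) = if i = j then (n : K) else 0 := by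
    intro i hi j hj
    rw [sum_range_pow_succ_of_pow_eq_one (by rw [div_pow, hn i hi, hn j hj, div_one])]
    exact if_congr ((div_eq_one_iff_eq (hw0 j hj)).trans ⟨fun h => hw hi hj h, congrArg w⟩) rfl rfl
  calc ∑ k ∈ range n, (∑ i ∈ s, x i * w i ^ (k + 1)) * (∑ j ∈ s, y j * (w j ^ (k + 1))⁻¹)
      = ∑ i ∈ s, ∑ j ∈ s, x i * y j * ∑ k ∈ range n, (w i / w j) ^ (k + 1) := by
        simp_rw [sum_mul_sum, mul_sum, div_pow, div_eq_mul_inv]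
        rw [sum_comm]
        refine sum_congr rfl fun i _ => ?_
        rw [sum_comm]
        exact sum_congr rfl fun j _ => sum_congr rfl fun k _ => by ring
    _ = ∑ i ∈ s, ∑ j ∈ s, x i * y j * if i = j then (n : K) else 0 :=
        sum_congr rfl fun i hi => sum_congr rfl fun j hj => by rw [horth i hi j hj]
    _ = n * ∑ i ∈ s, x i * y i := by
        rw [mul_sum]
        refine sum_congr rfl fun i hi => ?_
        simp_rw [mul_ite, mul_zero]
        rw [sum_ite_eq, if_pos hi, mul_comm]

theorem IsPrimitiveRoot.injOn_pow_Icc {K : Type*} [CommRing K] [IsDomain K] {ζ : K} {n : ℕ}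
    (hζ : IsPrimitiveRoot ζ n) : Set.InjOn (ζ ^ ·) (Icc 1 n) := by
  intro i hi j hj hij
  simp only [coe_Icc, Set.mem_Icc] at hi hj
  have hζ0 : ζ ≠ 0 := hζ.ne_zero (by omega)
  have : ζ ^ (i - 1) = ζ ^ (j - 1) := by
    apply mul_left_cancel₀ hζ0
    simp only [← pow_succ']
    rwa [Nat.sub_add_cancel hi.1, Nat.sub_add_cancel hj.1]
  have := hζ.pow_inj (by omega) (by omega) this
  omega

theorem IsPrimitiveRoot.exists_mem_Icc_pow_eq {K : Type*} [CommRing K] [IsDomain K] {ζ : K}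
    {n : ℕ} [NeZero n] (hζ : IsPrimitiveRoot ζ n) {z : K} (hz : z ^ n = 1) :
    ∃ i ∈ Icc 1 n, ζ ^ i = z := by
  obtain ⟨i, hi, rfl⟩ := hζ.eq_pow_of_pow_eq_one hz
  rcases Nat.eq_zero_or_pos i with rfl | hi0
  · exact ⟨n, by simp [Nat.one_le_iff_ne_zero, NeZero.ne n], by rw [hζ.pow_eq_one, pow_zero]⟩
  · exact ⟨i, mem_Icc.mpr ⟨hi0, hi.le⟩, rfl⟩

theorem sum_eq_card_filter_one_sub_card_filter_neg_one {α K : Type*} [Field K] [DecidableEq K]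
    (hK : ringChar K ≠ 2) (s : Finset α) (g : α → K) (hg : ∀ c, g c = 0 ∨ g c = 1 ∨ g c = -1) :
    ∑ c ∈ s, g c = #{c ∈ s | g c = 1} - #{c ∈ s | g c = -1} := by
  have hne : (-1 : K) ≠ 1 := Ring.neg_one_ne_one_of_char_ne_two hK
  have hg' : ∀ c, g c = (if g c = 1 then 1 else 0) - (if g c = -1 then 1 else 0) := by
    intro c
    rcases hg c with h | h | h <;> simp [h, hne, hne.symm]
  rw [sum_congr rfl fun c _ => hg' c, sum_sub_distrib, sum_boole, sum_boole]

theorem jacobiSum_pow_mul_jacobiSum_inv {F K : Type*} [Field F] [Fintype F] [Field K]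
    (h : ringChar K ≠ ringChar F) {χ ψ : MulChar F K} (hχ : Odd (orderOf χ))
    (hψ : orderOf ψ = 2) {m : ℕ} (hm : ¬ orderOf χ ∣ m) :
    jacobiSum (χ ^ m) ψ * jacobiSum (χ ^ m)⁻¹ ψ⁻¹ = Fintype.card F := by
  refine jacobiSum_mul_jacobiSum_inv h (fun h1 => hm (orderOf_dvd_of_pow_eq_one h1))
    (fun h1 => by simp [h1] at hψ) fun h1 => hm ?_
  have hsq : χ ^ (2 * m) = 1 := by
    rw [pow_mul', eq_inv_of_mul_eq_one_left h1, inv_pow, ← hψ, pow_orderOf_eq_one, inv_one]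
  exact Nat.Coprime.dvd_of_dvd_mul_left (Nat.coprime_two_right.mpr hχ)
    (orderOf_dvd_of_pow_eq_one hsq)

theorem sum_range_jacobiSum_pow_succ_mul_jacobiSum_inv {F K : Type*} [Field F] [Fintype F]
    [Field K] (h : ringChar K ≠ ringChar F) {χ ψ : MulChar F K} {n : ℕ} (hχ : orderOf χ = n)
    (hn : Odd n) (hψ : orderOf ψ = 2) :
    ∑ k ∈ range n, jacobiSum (χ ^ (k + 1)) ψ * jacobiSum (χ ^ (k + 1))⁻¹ ψ⁻¹ =
      ((n : K) - 1) * Fintype.card F + 1 := by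
  obtain ⟨m, rfl⟩ : ∃ m, n = m + 1 := Nat.exists_eq_add_one.mpr hn.pos
  have hψ1 : ψ ≠ 1 := fun h1 => by simp [h1] at hψ
  rw [sum_range_succ, ← hχ, pow_orderOf_eq_one, inv_one, jacobiSum_one_nontrivial hψ1,
    jacobiSum_one_nontrivial (inv_ne_one.mpr hψ1),
    sum_congr rfl fun k hk => jacobiSum_pow_mul_jacobiSum_inv h (hχ ▸ hn) hψ <| by
      rw [hχ]
      exact Nat.not_dvd_of_pos_of_lt k.succ_pos (by simpa using hk)]
  simp [hχ]

section SignedCount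

variable {F K : Type*} [Field F] [Fintype F] [Field K]

/-- With `z = ζ ^ i` this is the coefficient `aᵢ` of `ζ ^ i` in `J(χ₁, χ₂)`. -/
noncomputable def signedCount (χ₁ χ₂ : MulChar F K) (z : K) : ℤ :=
  ({c : F | c ≠ 0 ∧ c ≠ 1 ∧ χ₁ c = z ∧ χ₂ (1 - c) = 1}.ncard : ℤ) -
    ({c : F | c ≠ 0 ∧ c ≠ 1 ∧ χ₁ c = z ∧ χ₂ (1 - c) = -1}.ncard : ℤ)

variable {χ₁ χ₂ : MulChar F K}

theorem signedCount_eq_sum [DecidableEq K] (hK : ringChar K ≠ 2) (hχ₂ : χ₂.IsQuadratic) {z : K}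
    (hz : z ≠ 0) :
    (signedCount χ₁ χ₂ z : K) = ∑ c with χ₁ c = z, χ₂ (1 - c) := by
  have hset : ∀ u : K, u ≠ 0 → {c : F | c ≠ 0 ∧ c ≠ 1 ∧ χ₁ c = z ∧ χ₂ (1 - c) = u}
      = ↑{c ∈ ({c | χ₁ c = z} : Finset F) | χ₂ (1 - c) = u} := by
    intro u hu
    ext c
    simp only [Set.mem_ofPred_eq, coe_filter, mem_filter, mem_univ, true_and]
    constructor
    · rintro ⟨-, -, h₁, h₂⟩
      exact ⟨h₁, h₂⟩
    · rintro ⟨h₁, h₂⟩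
      refine ⟨?_, ?_, h₁, h₂⟩ <;> rintro rfl
      · exact hz (by rw [← h₁, MulChar.map_zero])
      · exact hu (by rw [← h₂, sub_self, MulChar.map_zero])
  rw [sum_eq_card_filter_one_sub_card_filter_neg_one hK _ _ fun c => hχ₂ (1 - c), signedCount,
    hset 1 one_ne_zero, hset (-1) (neg_ne_zero.mpr one_ne_zero), Set.ncard_coe_finset,
    Set.ncard_coe_finset]
  push_cast
  rfl

variable {ζ : K} {n : ℕ} [NeZero n]

theorem sum_apply_mul_apply_one_sub_eq_sum_signedCount (hζ : IsPrimitiveRoot ζ n)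
    (hχ₁ : χ₁ ^ n = 1) (hK : ringChar K ≠ 2) (hχ₂ : χ₂.IsQuadratic) (f : K → K) (hf : f 0 = 0) :
    ∑ c, f (χ₁ c) * χ₂ (1 - c) = ∑ i ∈ Icc 1 n, signedCount χ₁ χ₂ (ζ ^ i) * f (ζ ^ i) := by
  classical
  have hmaps : ∀ c ∈ ({c | c ≠ 0} : Finset F), χ₁ c ∈ (Icc 1 n).image (ζ ^ ·) := by
    intro c hc
    have hc1 : χ₁ c ^ n = 1 := by
      rw [← MulChar.pow_apply' _ (NeZero.ne n), hχ₁,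
        MulChar.one_apply (isUnit_iff_ne_zero.mpr (mem_filter.mp hc).2)]
    obtain ⟨i, hi, h⟩ := hζ.exists_mem_Icc_pow_eq hc1
    exact mem_image.mpr ⟨i, hi, h⟩
  have hfiber : ∀ z ∈ (Icc 1 n).image (ζ ^ ·),
      ∑ c ∈ ({c | c ≠ 0} : Finset F) with χ₁ c = z, f (χ₁ c) * χ₂ (1 - c)
        = signedCount χ₁ χ₂ z * f z := by
    intro z hz
    obtain ⟨i, -, rfl⟩ := mem_image.mp hz
    have hz0 : ζ ^ i ≠ 0 := pow_ne_zero _ (hζ.ne_zero (NeZero.ne n))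
    rw [signedCount_eq_sum hK hχ₂ hz0, sum_mul, filter_filter]
    refine sum_congr (filter_congr fun c _ => ?_) fun c hc => ?_
    · exact ⟨And.right, fun h => ⟨fun h0 => hz0 (by rw [← h, h0, MulChar.map_zero]), h⟩⟩
    · rw [(mem_filter.mp hc).2, mul_comm]
  calc ∑ c, f (χ₁ c) * χ₂ (1 - c) = ∑ c with c ≠ 0, f (χ₁ c) * χ₂ (1 - c) := by
        rw [sum_filter_of_ne]
        intro c _ hc h0
        rw [h0, MulChar.map_zero, hf, zero_mul] at hc
        exact hc rfl
    _ = ∑ z ∈ (Icc 1 n).image (ζ ^ ·), signedCount χ₁ χ₂ z * f z := by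
        rw [← sum_fiberwise_of_maps_to hmaps]
        exact sum_congr rfl hfiber
    _ = _ := sum_image hζ.injOn_pow_Icc

theorem jacobiSum_pow_eq_sum_signedCount (hζ : IsPrimitiveRoot ζ n) (hχ₁ : χ₁ ^ n = 1)
    (hK : ringChar K ≠ 2) (hχ₂ : χ₂.IsQuadratic) {m : ℕ} (hm : m ≠ 0) :
    jacobiSum (χ₁ ^ m) χ₂ = ∑ i ∈ Icc 1 n, signedCount χ₁ χ₂ (ζ ^ i) * (ζ ^ i) ^ m := by
  simp_rw [jacobiSum, MulChar.pow_apply' _ hm]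
  exact sum_apply_mul_apply_one_sub_eq_sum_signedCount hζ hχ₁ hK hχ₂ (· ^ m) (zero_pow hm)

theorem jacobiSum_inv_pow_eq_sum_signedCount (hζ : IsPrimitiveRoot ζ n) (hχ₁ : χ₁ ^ n = 1)
    (hK : ringChar K ≠ 2) (hχ₂ : χ₂.IsQuadratic) {m : ℕ} (hm : m ≠ 0) :
    jacobiSum (χ₁ ^ m)⁻¹ χ₂⁻¹ = ∑ i ∈ Icc 1 n, signedCount χ₁ χ₂ (ζ ^ i) * ((ζ ^ i) ^ m)⁻¹ := by
  simp_rw [hχ₂.inv, jacobiSum, MulChar.inv_apply_eq_inv', MulChar.pow_apply' _ hm]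
  exact sum_apply_mul_apply_one_sub_eq_sum_signedCount hζ hχ₁ hK hχ₂ (fun z => (z ^ m)⁻¹)
    (by rw [zero_pow hm, inv_zero])

theorem sum_signedCount_eq_neg_one (hζ : IsPrimitiveRoot ζ n) (hχ₁ : χ₁ ^ n = 1)
    (hK : ringChar K ≠ 2) (hχ₂ : χ₂.IsQuadratic) (hχ₂1 : χ₂ ≠ 1) :
    ∑ i ∈ Icc 1 n, (signedCount χ₁ χ₂ (ζ ^ i) : K) = -1 := by
  have h := jacobiSum_pow_eq_sum_signedCount hζ hχ₁ hK hχ₂ (NeZero.ne n)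
  rw [hχ₁, jacobiSum_one_nontrivial hχ₂1] at h
  rw [h]
  refine sum_congr rfl fun i _ => ?_
  rw [← pow_mul, mul_comm i n, pow_mul, hζ.pow_eq_one, one_pow, mul_one]

theorem sum_range_jacobiSum_pow_succ_mul_jacobiSum_inv_eq_mul_sum_sq (hζ : IsPrimitiveRoot ζ n)
    (hχ₁ : χ₁ ^ n = 1) (hK : ringChar K ≠ 2) (hχ₂ : χ₂.IsQuadratic) :
    ∑ k ∈ range n, jacobiSum (χ₁ ^ (k + 1)) χ₂ * jacobiSum (χ₁ ^ (k + 1))⁻¹ χ₂⁻¹ =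
      n * ∑ i ∈ Icc 1 n, (signedCount χ₁ χ₂ (ζ ^ i) : K) ^ 2 := by
  simp_rw [jacobiSum_pow_eq_sum_signedCount hζ hχ₁ hK hχ₂ (Nat.succ_ne_zero _),
    jacobiSum_inv_pow_eq_sum_signedCount hζ hχ₁ hK hχ₂ (Nat.succ_ne_zero _), sq]
  exact sum_range_sum_pow_succ_mul_sum_inv_pow_succ hζ.injOn_pow_Icc
    (fun i _ => by rw [← pow_mul, mul_comm i n, pow_mul, hζ.pow_eq_one, one_pow]) _ _

end SignedCount

theorem stmt_16_general (q : ℕ)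
    (F : Type*) [Field F] [Fintype F] (hF : Fintype.card F = q)
    (χ₁ χ₂ : MulChar F ℂ) (h₁ : orderOf χ₁ = 7) (h₂ : orderOf χ₂ = 2)
    (ζ : ℂ) (hζ : ζ = Complex.exp (2 * Real.pi * Complex.I / 7))
    (a : ℕ → ℤ)
    (ha : ∀ i, a i =
      ({c : F | c ≠ 0 ∧ c ≠ 1 ∧ χ₁ c = ζ ^ i ∧ χ₂ (1 - c) = 1}.ncard : ℤ) -
      ({c : F | c ≠ 0 ∧ c ≠ 1 ∧ χ₁ c = ζ ^ i ∧ χ₂ (1 - c) = -1}.ncard : ℤ)) :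
    (∑ i ∈ Finset.Icc 1 7, (a i : ℚ) ^ 2 = (6 * q + 1) / 7) ∧
      (∑ i ∈ Finset.Icc 1 7, ∑ j ∈ Finset.Icc (i + 1) 7, (a i : ℚ) * (a j : ℚ) =
        (-3 * (q : ℚ) + 3) / 7) := by
  have ha' : ∀ i, a i = signedCount χ₁ χ₂ (ζ ^ i) := ha
  have hζ7 : IsPrimitiveRoot ζ 7 := hζ ▸ Complex.isPrimitiveRoot_exp 7 (by norm_num)
  have hχ₁ : χ₁ ^ 7 = 1 := h₁ ▸ pow_orderOf_eq_one χ₁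
  have hχ₂ : χ₂.IsQuadratic :=
    MulChar.isQuadratic_iff_sq_eq_one.mpr (h₂ ▸ pow_orderOf_eq_one χ₂)
  have hC2 : ringChar ℂ ≠ 2 := by rw [ringChar.eq_zero]; norm_num
  have hCF : ringChar ℂ ≠ ringChar F := by
    rw [ringChar.eq_zero]; exact (CharP.ringChar_ne_zero_of_finite F).symm
  have hsum : ∑ i ∈ Icc 1 7, (a i : ℚ) = -1 := by
    have h := sum_signedCount_eq_neg_one hζ7 hχ₁ hC2 hχ₂ fun h => by simp [h] at h₂
    simp only [← ha'] at h
    exact_mod_cast h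
  have hsq : 7 * ∑ i ∈ Icc 1 7, (a i : ℚ) ^ 2 = 6 * q + 1 := by
    have h := (sum_range_jacobiSum_pow_succ_mul_jacobiSum_inv_eq_mul_sum_sq hζ7 hχ₁ hC2 hχ₂).symm
      |>.trans (sum_range_jacobiSum_pow_succ_mul_jacobiSum_inv hCF h₁ (by decide) h₂)
    simp only [← ha', hF] at h
    norm_num at h
    exact_mod_cast h
  have hpairs := sq_sum_Icc_eq_sum_sq_add_two_mul (fun i => (a i : ℚ)) 1 7
  rw [hsum] at hpairs
  constructor <;> linarith

/-- For q ≡ 1 (mod 7), with a₁,…,a₇ the signed-count integer coefficients of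
J(λ₁,λ₂) = Σ aᵢ ζ^i (λ₁ of order 7, λ₂ quadratic, ζ = e^{2πi/7}), one has
Σ aᵢ² = (6q+1)/7 and Σ_{i<j} aᵢaⱼ = (−3q+3)/7. -/
theorem stmt_16 (q : ℕ) (hq : Odd q) (hq' : IsPrimePow q) (hq7 : q % 7 = 1)
    (F : Type*) [Field F] [Fintype F] (hF : Fintype.card F = q)
    (χ₁ χ₂ : MulChar F ℂ) (h₁ : orderOf χ₁ = 7) (h₂ : orderOf χ₂ = 2)
    (ζ : ℂ) (hζ : ζ = Complex.exp (2 * Real.pi * Complex.I / 7))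
    (a : ℕ → ℤ)
    (ha : ∀ i, a i =
      ({c : F | c ≠ 0 ∧ c ≠ 1 ∧ χ₁ c = ζ ^ i ∧ χ₂ (1 - c) = 1}.ncard : ℤ) -
      ({c : F | c ≠ 0 ∧ c ≠ 1 ∧ χ₁ c = ζ ^ i ∧ χ₂ (1 - c) = -1}.ncard : ℤ)) :
    (∑ i ∈ Finset.Icc 1 7, (a i : ℚ) ^ 2 = (6 * q + 1) / 7) ∧
      (∑ i ∈ Finset.Icc 1 7, ∑ j ∈ Finset.Icc (i + 1) 7, (a i : ℚ) * (a j : ℚ) =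
        (-3 * (q : ℚ) + 3) / 7) :=
  stmt_16_general q F hF χ₁ χ₂ h₁ h₂ ζ hζ a ha
end

section
/- Let ℓ = 5 and q an odd prime power with q ≡ 1 (mod 5). With the notation a_i (1 ≤ i ≤ 5) for the integer coefficients of J(λ₁,λ₂) = Σ_{i=1}^5 a_i ζ^i as signed counts, one has (1/5)·Σ_{n=1}^{5} (5a_{5−n mod 5} − Σ_{i=1}^{5} a_i)² = 4q, where indices are mod 5 with a_0 = a_5. -/
open Finset

/-- For q ≡ 1 (mod 5), with a₁,…,a₅ the signed-count integer coefficients of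
J(λ₁,λ₂) = Σ aᵢ ζ^i (λ₁ of order 5, λ₂ quadratic, ζ = e^{2πi/5}), one has
(1/5)·Σ_{n=1}^{5} (5·a_{5−n mod 5} − Σᵢ aᵢ)² = 4q, with a₀ interpreted as a₅. -/
theorem stmt_18 (q : ℕ) (hq : Odd q) (hq' : IsPrimePow q) (hq5 : q % 5 = 1)
    (F : Type*) [Field F] [Fintype F] (hF : Fintype.card F = q)
    (χ₁ χ₂ : MulChar F ℂ) (h₁ : orderOf χ₁ = 5) (h₂ : orderOf χ₂ = 2)
    (ζ : ℂ) (hζ : ζ = Complex.exp (2 * Real.pi * Complex.I / 5))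
    (a : ℕ → ℤ)
    (ha : ∀ i, a i =
      ({c : F | c ≠ 0 ∧ c ≠ 1 ∧ χ₁ c = ζ ^ i ∧ χ₂ (1 - c) = 1}.ncard : ℤ) -
      ({c : F | c ≠ 0 ∧ c ≠ 1 ∧ χ₁ c = ζ ^ i ∧ χ₂ (1 - c) = -1}.ncard : ℤ)) :
    (1 / 5 : ℚ) * ∑ n ∈ Finset.Icc 1 5,
        ((5 * a (if n = 5 then 5 else 5 - n) - ∑ i ∈ Finset.Icc 1 5, a i : ℤ) : ℚ) ^ 2 =
      4 * q := by
  classical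
  -- ζ is a primitive 5th root of unity
  have hζ5 : IsPrimitiveRoot ζ 5 := by
    have := Complex.isPrimitiveRoot_exp 5 (by norm_num)
    rw [hζ]; exact_mod_cast this
  have hζpow5 : ζ ^ 5 = 1 := hζ5.pow_eq_one
  -- basic character facts
  have hχ₁5 : χ₁ ^ 5 = 1 := by rw [← h₁]; exact pow_orderOf_eq_one χ₁
  have hχ₂2 : χ₂ ^ 2 = 1 := by rw [← h₂]; exact pow_orderOf_eq_one χ₂
  have hχ₂ne : χ₂ ≠ 1 := by
    intro h; rw [h, orderOf_one] at h₂; norm_num at h₂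
  have hχ₂inv : χ₂⁻¹ = χ₂ := by
    rw [inv_eq_iff_mul_eq_one, ← sq, hχ₂2]
  -- the finsets
  set P : ℕ → Finset F := fun i =>
    univ.filter (fun c => c ≠ 0 ∧ c ≠ 1 ∧ χ₁ c = ζ ^ i ∧ χ₂ (1 - c) = 1) with hP
  set M : ℕ → Finset F := fun i =>
    univ.filter (fun c => c ≠ 0 ∧ c ≠ 1 ∧ χ₁ c = ζ ^ i ∧ χ₂ (1 - c) = -1) with hM
  have haPM : ∀ i, a i = ((P i).card : ℤ) - ((M i).card : ℤ) := by
    intro i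
    rw [ha i]
    congr 2
    · simp [Set.ncard_eq_toFinset_card', Set.toFinset_setOf, hP]
    · simp [Set.ncard_eq_toFinset_card', Set.toFinset_setOf, hM]
  -- injectivity of powers of ζ in range [1,5]
  have hζinj : ∀ i ∈ Icc 1 5, ∀ j ∈ Icc 1 5, ζ ^ i = ζ ^ j → i = j := by
    intro i hi j hj hij
    simp only [mem_Icc] at hi hj
    have e : ∀ k, 1 ≤ k → k ≤ 5 → ζ ^ (k % 5) = ζ ^ k := by
      intro k hk1 hk2
      rcases eq_or_lt_of_le hk2 with rfl | hlt
      · simp [hζpow5]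
      · rw [Nat.mod_eq_of_lt hlt]
    have key2 : ζ ^ (i % 5) = ζ ^ (j % 5) := by
      rw [e i hi.1 hi.2, e j hj.1 hj.2]; exact hij
    have h5 : (0:ℕ) < 5 := by norm_num
    have := hζ5.pow_inj (Nat.mod_lt i h5) (Nat.mod_lt j h5) key2
    omega
  -- the base set
  set T : Finset F := univ.filter (fun c => c ≠ 0 ∧ c ≠ 1) with hT
  -- cover
  have hdisj : ∀ i ∈ (Icc 1 5 : Finset ℕ), ∀ j ∈ Icc 1 5, i ≠ j →
      Disjoint (P i ∪ M i) (P j ∪ M j) := by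
    intro i hi j hj hij
    rw [Finset.disjoint_left]
    intro c hc hc'
    have h1 : χ₁ c = ζ ^ i := by
      simp only [hP, hM, mem_union, mem_filter] at hc; tauto
    have h2 : χ₁ c = ζ ^ j := by
      simp only [hP, hM, mem_union, mem_filter] at hc'; tauto
    exact hij (hζinj i hi j hj (h1 ▸ h2))
  have hcover : T = (Icc 1 5).biUnion (fun i => P i ∪ M i) := by
    ext c
    simp only [hT, hP, hM, mem_filter, mem_biUnion, mem_union, mem_univ, true_and, mem_Icc]
    constructor
    · rintro ⟨hc0, hc1⟩
      have hc0' : IsUnit c := isUnit_iff_ne_zero.mpr hc0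
      have hpow : χ₁ c ^ 5 = 1 := by
        rw [← MulChar.pow_apply' χ₁ (by norm_num) c, hχ₁5, MulChar.one_apply hc0']
      obtain ⟨i, hi5, hieq⟩ := hζ5.eq_pow_of_pow_eq_one hpow
      have hc1' : IsUnit (1 - c) := isUnit_iff_ne_zero.mpr (sub_ne_zero.mpr (Ne.symm hc1))
      have hsq : χ₂ (1 - c) ^ 2 = 1 := by
        rw [← MulChar.pow_apply' χ₂ (by norm_num) _, hχ₂2, MulChar.one_apply hc1']
      have hpm : χ₂ (1 - c) = 1 ∨ χ₂ (1 - c) = -1 := sq_eq_one_iff.mp hsq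
      refine ⟨if i = 0 then 5 else i, ⟨by split <;> omega, by split <;> omega⟩, ?_⟩
      have hieq' : χ₁ c = ζ ^ (if i = 0 then 5 else i) := by
        split
        · next h => rw [← hieq, h, pow_zero, hζpow5]
        · rw [hieq]
      rcases hpm with h | h
      · exact Or.inl ⟨hc0, hc1, hieq', h⟩
      · exact Or.inr ⟨hc0, hc1, hieq', h⟩
    · rintro ⟨i, _, h | h⟩ <;> exact ⟨h.1, h.2.1⟩
  -- the key identity: partial character sums
  have key : ∀ m : ℕ, ∑ i ∈ Icc 1 5, (a i : ℂ) * ζ ^ (i * m) =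
      ∑ c ∈ T, (χ₁ c) ^ m * χ₂ (1 - c) := by
    intro m
    rw [hcover, Finset.sum_biUnion]
    · refine Finset.sum_congr rfl fun i hi => ?_
      have hPM : Disjoint (P i) (M i) := by
        rw [Finset.disjoint_left]
        intro c hc hc'
        simp only [hP, hM, mem_filter] at hc hc'
        have h1 := hc.2.2.2.2
        have h2 := hc'.2.2.2.2
        rw [h1] at h2
        norm_num at h2
      rw [Finset.sum_union hPM]
      have e1 : ∑ c ∈ P i, (χ₁ c) ^ m * χ₂ (1 - c) = ((P i).card : ℂ) * ζ ^ (i * m) := by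
        have step : ∀ c ∈ P i, (χ₁ c) ^ m * χ₂ (1 - c) = ζ ^ (i * m) := by
          intro c hc
          simp only [hP, mem_filter] at hc
          rw [hc.2.2.2.1, hc.2.2.2.2, mul_one, ← pow_mul]
        rw [Finset.sum_congr rfl step, Finset.sum_const, nsmul_eq_mul]
      have e2 : ∑ c ∈ M i, (χ₁ c) ^ m * χ₂ (1 - c) = ((M i).card : ℂ) * (-ζ ^ (i * m)) := by
        have step : ∀ c ∈ M i, (χ₁ c) ^ m * χ₂ (1 - c) = -ζ ^ (i * m) := by
          intro c hc
          simp only [hM, mem_filter] at hc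
          rw [hc.2.2.2.1, hc.2.2.2.2, ← pow_mul]
          ring
        rw [Finset.sum_congr rfl step, Finset.sum_const, nsmul_eq_mul]
      rw [e1, e2, haPM i]
      push_cast
      ring
    · exact hdisj
  
  -- decomposition of univ
  have h01 : (0:F) ≠ 1 := zero_ne_one
  have h0T : (0:F) ∉ insert (1:F) T := by
    simp only [mem_insert, hT, mem_filter, mem_univ, true_and]
    push_neg
    exact ⟨h01, fun h => absurd rfl h⟩
  have h1T : (1:F) ∉ T := by simp [hT]
  have hT01 : (univ : Finset F) = insert (0:F) (insert (1:F) T) := by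
    ext c
    simp only [mem_univ, mem_insert, hT, mem_filter, true_and, true_iff]
    by_cases hc0 : c = 0
    · tauto
    · by_cases hc1 : c = 1 <;> tauto
  -- the sum of a i is -1
  have hSsum : ∑ c ∈ T, χ₂ (1 - c) = -1 := by
    have htot : ∑ c : F, χ₂ (1 - c) = 0 := by
      have hcomp := Equiv.sum_comp (Equiv.subLeft (1:F)) (fun u => χ₂ u)
      simp only [Equiv.subLeft_apply] at hcomp
      rw [hcomp]
      exact MulChar.sum_eq_zero_of_ne_one hχ₂ne
    rw [hT01, Finset.sum_insert h0T, Finset.sum_insert h1T, sub_zero, sub_self,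
      MulChar.map_one, MulChar.map_zero] at htot
    linear_combination htot
  have hSC : ∑ i ∈ Icc 1 5, (a i : ℂ) = -1 := by
    have hk := key 0
    simp only [Nat.mul_zero, pow_zero, mul_one, one_mul] at hk
    rw [hk]
    exact hSsum
  have hS : (∑ i ∈ Icc 1 5, a i) = -1 := by
    have : ((∑ i ∈ Icc 1 5, a i : ℤ) : ℂ) = ((-1 : ℤ) : ℂ) := by push_cast; rw [← hSC]
    exact_mod_cast this
  -- relating to Jacobi sums
  have hjac : ∀ m : ℕ, m ≠ 0 → ∑ c ∈ T, (χ₁ c) ^ m * χ₂ (1 - c) = jacobiSum (χ₁ ^ m) χ₂ := by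
    intro m hm
    rw [jacobiSum]
    simp only [χ₁.pow_apply' hm]
    rw [hT01, Finset.sum_insert h0T, Finset.sum_insert h1T]
    simp only [sub_self, sub_zero, MulChar.map_zero, zero_pow hm, mul_zero, zero_mul, zero_add]
  have hpowinv : ∀ k, 1 ≤ k → k ≤ 4 → (χ₁ ^ k)⁻¹ = χ₁ ^ (5 - k) := by
    intro k hk1 hk4
    rw [inv_eq_iff_mul_eq_one, ← pow_add, show k + (5 - k) = 5 by omega, hχ₁5]
  have hnt : ∀ k, 1 ≤ k → k ≤ 4 → χ₁ ^ k ≠ 1 := by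
    intro k hk1 hk4 h
    have hdvd := orderOf_dvd_of_pow_eq_one h
    rw [h₁] at hdvd
    have := Nat.le_of_dvd (by omega) hdvd
    omega
  have hnt2 : ∀ k, 1 ≤ k → k ≤ 4 → χ₁ ^ k * χ₂ ≠ 1 := by
    intro k hk1 hk4 h
    have h2' : (χ₁ ^ k * χ₂) ^ 2 = 1 := by rw [h, one_pow]
    rw [mul_pow, ← pow_mul, hχ₂2, mul_one] at h2'
    have hdvd := orderOf_dvd_of_pow_eq_one h2'
    rw [h₁] at hdvd
    omega
  have hchar : ringChar ℂ ≠ ringChar F := by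
    have h0 : ringChar ℂ = 0 := ringChar.eq_zero
    have hp : (ringChar F).Prime := CharP.char_is_prime F (ringChar F)
    rw [h0]
    exact fun h => hp.ne_zero h.symm
  have hJq : ∀ k, 1 ≤ k → k ≤ 4 →
      (∑ i ∈ Icc 1 5, (a i : ℂ) * ζ ^ (i * k)) *
        (∑ i ∈ Icc 1 5, (a i : ℂ) * ζ ^ (i * (5 - k))) = (q : ℂ) := by
    intro k hk1 hk4
    rw [key k, key (5 - k), hjac k (by omega), hjac (5 - k) (by omega)]
    have hJJ := jacobiSum_mul_jacobiSum_inv (F := F) (F' := ℂ) hchar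
      (hnt k hk1 hk4) hχ₂ne (hnt2 k hk1 hk4)
    rw [hpowinv k hk1 hk4, hχ₂inv, hF] at hJJ
    exact hJJ
  -- orthogonality
  have hζne : ζ ≠ 0 := hζ5.ne_zero (by norm_num)
  have hinner : ∀ i ∈ Icc 1 5, ∀ j ∈ Icc 1 5,
      ∑ k ∈ range 5, ζ ^ (i * k) * ζ ^ (j * (5 - k)) = if i = j then (5 : ℂ) else 0 := by
    intro i hi j hj
    have hterm : ∀ k ∈ range 5, ζ ^ (i * k) * ζ ^ (j * (5 - k)) = (ζ ^ i / ζ ^ j) ^ k := by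
      intro k hk
      simp only [mem_range] at hk
      have h5k : (ζ ^ j) ^ (5 - k) = (ζ ^ j) ^ 5 / (ζ ^ j) ^ k :=
        pow_sub₀ _ (pow_ne_zero j hζne) (by omega)
      have hj5 : (ζ ^ j) ^ 5 = 1 := by
        rw [← pow_mul, mul_comm, pow_mul, hζpow5, one_pow]
      rw [pow_mul, pow_mul, h5k, hj5, div_pow]
      field_simp
    rw [Finset.sum_congr rfl hterm]
    by_cases hij : i = j
    · subst hij
      simp [div_self (pow_ne_zero i hζne)]
    · have hne1 : ζ ^ i / ζ ^ j ≠ 1 := by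
        intro h
        rw [div_eq_one_iff_eq (pow_ne_zero j hζne)] at h
        exact hij (hζinj i hi j hj h)
      rw [geom_sum_eq hne1]
      have h51 : (ζ ^ i / ζ ^ j) ^ 5 = 1 := by
        rw [div_pow, ← pow_mul, ← pow_mul, mul_comm i 5, mul_comm j 5, pow_mul, pow_mul,
          hζpow5, one_pow, one_pow, div_self one_ne_zero]
      rw [h51, sub_self, zero_div, if_neg hij]
  -- the orthogonality computation
  have horth : ∑ k ∈ range 5, (∑ i ∈ Icc 1 5, (a i : ℂ) * ζ ^ (i * k)) *
      (∑ j ∈ Icc 1 5, (a j : ℂ) * ζ ^ (j * (5 - k))) = 5 * ∑ i ∈ Icc 1 5, (a i : ℂ) ^ 2 := by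
    have expand : ∀ k ∈ range 5,
        (∑ i ∈ Icc 1 5, (a i : ℂ) * ζ ^ (i * k)) *
          (∑ j ∈ Icc 1 5, (a j : ℂ) * ζ ^ (j * (5 - k)))
        = ∑ i ∈ Icc 1 5, ∑ j ∈ Icc 1 5,
            (a i : ℂ) * (a j : ℂ) * (ζ ^ (i * k) * ζ ^ (j * (5 - k))) := by
      intro k _
      rw [Finset.sum_mul_sum]
      exact Finset.sum_congr rfl fun i _ => Finset.sum_congr rfl fun j _ => by ring
    rw [Finset.sum_congr rfl expand, Finset.sum_comm]
    have inner2 : ∀ i ∈ Icc 1 5,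
        ∑ k ∈ range 5, ∑ j ∈ Icc 1 5,
            (a i : ℂ) * (a j : ℂ) * (ζ ^ (i * k) * ζ ^ (j * (5 - k)))
        = (a i : ℂ) ^ 2 * 5 := by
      intro i hi
      rw [Finset.sum_comm]
      have inner3 : ∀ j ∈ Icc 1 5,
          ∑ k ∈ range 5, (a i : ℂ) * (a j : ℂ) * (ζ ^ (i * k) * ζ ^ (j * (5 - k)))
          = if i = j then (a i : ℂ) * (a j : ℂ) * 5 else 0 := by
        intro j hj
        rw [← Finset.mul_sum, hinner i hi j hj]
        split <;> simp
      rw [Finset.sum_congr rfl inner3, Finset.sum_ite_eq (Icc 1 5) i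
        (fun j => (a i : ℂ) * (a j : ℂ) * 5), if_pos hi]
      ring
    rw [Finset.sum_congr rfl inner2, Finset.mul_sum]
    exact Finset.sum_congr rfl fun i _ => by ring
  -- the Jacobi sum computation of the same quantity
  have hmain : (5 : ℂ) * ∑ i ∈ Icc 1 5, (a i : ℂ) ^ 2 = 1 + 4 * q := by
    rw [← horth]
    rw [Finset.sum_range_succ, Finset.sum_range_succ, Finset.sum_range_succ,
      Finset.sum_range_succ, Finset.sum_range_one]
    rw [hJq 1 (by norm_num) (by norm_num), hJq 2 (by norm_num) (by norm_num),
      hJq 3 (by norm_num) (by norm_num), hJq 4 (by norm_num) (by norm_num)]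
    have hfirst : (∑ i ∈ Icc 1 5, (a i : ℂ) * ζ ^ (i * 0)) *
        (∑ j ∈ Icc 1 5, (a j : ℂ) * ζ ^ (j * (5 - 0))) = 1 := by
      have e1 : ∑ i ∈ Icc 1 5, (a i : ℂ) * ζ ^ (i * 0) = -1 := by
        simp only [Nat.mul_zero, pow_zero, mul_one]
        exact hSC
      have e2 : ∑ j ∈ Icc 1 5, (a j : ℂ) * ζ ^ (j * (5 - 0)) = -1 := by
        have : ∀ j ∈ Icc 1 5, (a j : ℂ) * ζ ^ (j * (5 - 0)) = (a j : ℂ) := by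
          intro j _
          rw [Nat.sub_zero, mul_comm j 5, pow_mul, hζpow5, one_pow, mul_one]
        rw [Finset.sum_congr rfl this]
        exact hSC
      rw [e1, e2]
      ring
    rw [hfirst]
    ring
  have hQZ : (5 : ℤ) * ∑ i ∈ Icc 1 5, (a i) ^ 2 = 1 + 4 * (q : ℤ) := by
    exact_mod_cast hmain
  -- final algebra
  clear key hSC hmain horth hinner hJq hjac hSsum hcover hdisj haPM ha hT01 h0T h1T
  have hIcc : (Icc 1 5 : Finset ℕ) = {1, 2, 3, 4, 5} := by decide
  rw [hIcc] at hS hQZ ⊢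
  norm_num [Finset.sum_insert, Finset.mem_insert, Finset.mem_singleton] at hS hQZ ⊢
  have h1 : ((a 1 + (a 2 + (a 3 + (a 4 + a 5))) : ℤ) : ℚ) = ((-1 : ℤ) : ℚ) := by
    rw [hS]
  have h2 : ((5 * (a 1 ^ 2 + (a 2 ^ 2 + (a 3 ^ 2 + (a 4 ^ 2 + a 5 ^ 2)))) : ℤ) : ℚ)
      = ((1 + 4 * (q : ℤ) : ℤ) : ℚ) := by rw [hQZ]
  push_cast at h1 h2 ⊢
  linear_combination h2 + (1 - ((a 1 : ℚ) + a 2 + a 3 + a 4 + a 5)) * h1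
end

section
/- Let K/F_q be a function field of genus g ≥ 2 obtained as K = F_q(T, y) with y^ℓ = T² + aT + b, where ℓ ≥ 5 is prime, gcd(q, 2ℓ) = 1, a, b ∈ F_q, and a² − 4b ≠ 0. Then K is a hyperelliptic function field: it contains a rational subfield F_q(x) with [K : F_q(x)] = 2. -/
/-!
Take `x = y`. It is transcendental because `y ^ ℓ` is a nonconstant polynomial in `T`, and over
`E = F_q(y)` the generator `T` is a root of `X ^ 2 + a X + (b - y ^ ℓ)`. This quadratic has no
root `t = P(y) / Q(y)` in `E`: the degree of `P ^ 2 + a P Q + b Q ^ 2` is either `2 deg P` (even)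
or at most `2 deg Q`, whereas `y ^ ℓ Q ^ 2` has the odd degree `ℓ + 2 deg Q`. Hence
`[K : F_q(y)] = [E(T) : E] = 2`.
-/

open Polynomial IntermediateField

namespace Polynomial

variable {R : Type*} [CommRing R] [IsDomain R]

theorem sq_add_C_mul_mul_add_C_mul_sq_ne_X_pow_mul_sq (a b : R) {ℓ : ℕ} (hℓ : Odd ℓ)
    (P : R[X]) {Q : R[X]} (hQ : Q ≠ 0) :
    P ^ 2 + C a * P * Q + C b * Q ^ 2 ≠ X ^ ℓ * Q ^ 2 := by
  intro h
  have hrhs : (X ^ ℓ * Q ^ 2).natDegree = ℓ + 2 * Q.natDegree := by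
    rw [natDegree_mul (pow_ne_zero _ X_ne_zero) (pow_ne_zero _ hQ), natDegree_X_pow,
      natDegree_pow]
  have hP2 : (P ^ 2).natDegree = 2 * P.natDegree := natDegree_pow P 2
  have hPQ : (C a * P * Q).natDegree ≤ P.natDegree + Q.natDegree :=
    natDegree_mul_le_of_le (natDegree_C_mul_le a P) le_rfl
  have hQ2 : (C b * Q ^ 2).natDegree ≤ 2 * Q.natDegree :=
    (natDegree_C_mul_le b _).trans natDegree_pow_le
  have hlow := natDegree_add_le (C a * P * Q) (C b * Q ^ 2)
  obtain ⟨k, rfl⟩ := hℓ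
  rcases lt_or_ge Q.natDegree P.natDegree with hlt | hle
  · have hdeg := congrArg natDegree h
    rw [add_assoc, natDegree_add_eq_left_of_natDegree_lt (by omega), hP2, hrhs] at hdeg
    omega
  · have hdeg := natDegree_add_le (P ^ 2 + C a * P * Q) (C b * Q ^ 2)
    have := natDegree_add_le (P ^ 2) (C a * P * Q)
    rw [h, hrhs] at hdeg
    omega

end Polynomial

section

variable {F K : Type*} [Field F] [Field K] [Algebra F K]

theorem Transcendental.sq_add_mul_add_ne_pow {y : K} (hy : Transcendental F y) {ℓ : ℕ}
    (hℓ : Odd ℓ) (a b : F) {t : K} (ht : t ∈ F⟮y⟯) :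
    t ^ 2 + algebraMap F K a * t + algebraMap F K b ≠ y ^ ℓ := by
  obtain ⟨P, Q, hQ, rfl⟩ :
      ∃ P Q : F[X], Q ≠ 0 ∧ t = Polynomial.aeval y P / Polynomial.aeval y Q := by
    obtain ⟨P, Q, rfl⟩ := (mem_adjoin_simple_iff F t).mp ht
    by_cases hQ : Q = 0
    · exact ⟨0, 1, one_ne_zero, by simp [hQ]⟩
    · exact ⟨P, Q, hQ, rfl⟩
  have hinj : Function.Injective (Polynomial.aeval y : F[X] →ₐ[F] K) :=
    transcendental_iff_injective.mp hy
  have hQy : Polynomial.aeval y Q ≠ 0 := (map_ne_zero_iff _ hinj).mpr hQ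
  intro h
  apply sq_add_C_mul_mul_add_C_mul_sq_ne_X_pow_mul_sq a b hℓ P hQ
  apply hinj
  simp only [map_add, map_mul, map_pow, aeval_X, aeval_C]
  field_simp at h
  linear_combination h

theorem Transcendental.of_pow_eq_sq_add_mul_add {T y : K} (hT : Transcendental F T) {ℓ : ℕ}
    (a b : F) (h : y ^ ℓ = T ^ 2 + algebraMap F K a * T + algebraMap F K b) :
    Transcendental F y := by
  have hf := isMonicOfDegree_add_add_two a b
  have hfT : Transcendental F (Polynomial.aeval T (X ^ 2 + C a * X + C b)) :=
    hT.aeval _ (by rw [hf.natDegree_eq]; norm_num) (by rw [hf.monic.leadingCoeff]; exact one_mem _)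
  have : Transcendental F (Polynomial.aeval y (X ^ ℓ : F[X])) := by
    simpa [h] using hfT
  exact (transcendental_aeval_iff.mp this).1

theorem Transcendental.finrank_adjoin_adjoin_eq_two {T y : K} (hy : Transcendental F y) {ℓ : ℕ}
    (hℓ : Odd ℓ) (a b : F) (h : y ^ ℓ = T ^ 2 + algebraMap F K a * T + algebraMap F K b) :
    Module.finrank F⟮y⟯ F⟮y⟯⟮T⟯ = 2 := by
  set g : F⟮y⟯[X] := X ^ 2 + C (algebraMap F F⟮y⟯ a) * X
    + C (algebraMap F F⟮y⟯ b - AdjoinSimple.gen F y ^ ℓ)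
  have hg : g.IsMonicOfDegree 2 := isMonicOfDegree_add_add_two _ _
  have hgT : Polynomial.aeval T g = 0 := by
    simp [g, h]
  have hirr : Irreducible g := by
    refine irreducible_of_degree_le_three_of_not_isRoot (by simp [hg.natDegree_eq])
      fun r hr ↦ ?_
    refine hy.sq_add_mul_add_ne_pow hℓ a b r.2 ?_
    have := congrArg (algebraMap F⟮y⟯ K) hr.eq_zero
    simp only [g, eval_add, eval_pow, eval_X, eval_mul, eval_C,
      IntermediateField.algebraMap_apply, IntermediateField.coe_add, SubmonoidClass.coe_pow,
      IntermediateField.coe_mul, SubalgebraClass.coe_algebraMap, AddSubgroupClass.coe_sub,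
      AdjoinSimple.coe_gen, ZeroMemClass.coe_zero] at this
    linear_combination this
  rw [adjoin.finrank ⟨g, hg.monic, hgT⟩,
    ← minpoly.eq_of_irreducible_of_monic hirr hgT hg.monic, hg.natDegree_eq]

end

theorem stmt_19_general (ℓ : ℕ) (hℓ : ℓ.Prime) (hℓ5 : 5 ≤ ℓ)
    (Fq : Type*) [Field Fq]
    (a b : Fq)
    (K : Type*) [Field K] [Algebra Fq K] (T y : K)
    (hT : Transcendental Fq T)
    (hy : y ^ ℓ = T ^ 2 + algebraMap Fq K a * T + algebraMap Fq K b)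
    (hgen : IntermediateField.adjoin Fq {T, y} = ⊤) :
    ∃ x : K, Transcendental Fq x ∧
      Module.finrank (↥(IntermediateField.adjoin Fq {x})) K = 2 := by
  have hodd : Odd ℓ := hℓ.odd_of_ne_two (by omega)
  have hyT : Transcendental Fq y := hT.of_pow_eq_sq_add_mul_add a b hy
  have htop : Fq⟮y⟯⟮T⟯ = ⊤ := by
    rw [← restrictScalars_eq_top_iff (K := Fq), adjoin_simple_adjoin_simple, Set.pair_comm, hgen]
  refine ⟨y, hyT, ?_⟩
  rw [← finrank_top', ← htop]
  exact hyT.finrank_adjoin_adjoin_eq_two hodd a b hy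

/-- The function field K = F_q(T, y) with y^ℓ = T² + aT + b (ℓ ≥ 5 prime,
gcd(q, 2ℓ) = 1, a² − 4b ≠ 0) is hyperelliptic: it contains a rational subfield
F_q(x) with [K : F_q(x)] = 2. -/
theorem stmt_19 (q ℓ : ℕ) (hq : IsPrimePow q) (hℓ : ℓ.Prime) (hℓ5 : 5 ≤ ℓ)
    (hcop : Nat.gcd q (2 * ℓ) = 1)
    (Fq : Type*) [Field Fq] [Fintype Fq] (hF : Fintype.card Fq = q)
    (a b : Fq) (hab : a ^ 2 - 4 * b ≠ 0)
    (K : Type*) [Field K] [Algebra Fq K] (T y : K)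
    (hT : Transcendental Fq T)
    (hy : y ^ ℓ = T ^ 2 + algebraMap Fq K a * T + algebraMap Fq K b)
    (hgen : IntermediateField.adjoin Fq {T, y} = ⊤) :
    ∃ x : K, Transcendental Fq x ∧
      Module.finrank (↥(IntermediateField.adjoin Fq {x})) K = 2 :=
  stmt_19_general ℓ hℓ hℓ5 Fq a b K T y hT hy hgen
end
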